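/- arXiv:2402.00682 — 9 statements merged into one kernel-verified Lean document; each statement's English description precedes it below -/
import Mathlib

section
/- Let T : A → B be a linear map between Banach algebras such that the bilinear map (a,b) ↦ T(ab) − T(a)T(b) is continuous. Then for any fixed b, c ∈ A, the linear map x ↦ T(x)·(T(bc) − T(b)T(c)) from A to B is continuous. -/
open Filter Topology

theorem stmt0 {𝕜 A B : Type*} [RCLike 𝕜]
    [NormedRing A] [NormedRing B] [NormedAlgebra 𝕜 A] [NormedAlgebra 𝕜 B]
    [CompleteSpace A] [CompleteSpace B]
    (T : A →ₗ[𝕜] B) (C : ℝ) (hC : 0 < C)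
    (h : ∀ a b : A, ‖T (a * b) - T a * T b‖ ≤ C * ‖a‖ * ‖b‖)
    (b c : A) :
    Continuous fun x : A => T x * (T (b * c) - T b * T c) := by
  set d : B := T (b * c) - T b * T c with hd
  have key : ∀ x : A, T x * d =
      (T (x * b * c) - T (x * b) * T c) + (T (x * b) - T x * T b) * T c
        - (T (x * (b * c)) - T x * T (b * c)) := by
    intro x
    rw [hd, ← mul_assoc]
    noncomm_ring
  have bound : ∀ x : A,
      ‖T x * d‖ ≤ (C * ‖b‖ * ‖c‖ + C * ‖b‖ * ‖T c‖ + C * ‖b * c‖) * ‖x‖ := by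
    intro x
    rw [key x]
    have h1 : ‖T (x * b * c) - T (x * b) * T c‖ ≤ C * ‖b‖ * ‖c‖ * ‖x‖ := by
      calc ‖T (x * b * c) - T (x * b) * T c‖ ≤ C * ‖x * b‖ * ‖c‖ := h (x * b) c
        _ ≤ C * (‖x‖ * ‖b‖) * ‖c‖ := by
            gcongr
            exact norm_mul_le x b
        _ = C * ‖b‖ * ‖c‖ * ‖x‖ := by ring
    have h2 : ‖(T (x * b) - T x * T b) * T c‖ ≤ C * ‖b‖ * ‖T c‖ * ‖x‖ := by
      calc ‖(T (x * b) - T x * T b) * T c‖ ≤ ‖T (x * b) - T x * T b‖ * ‖T c‖ :=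
            norm_mul_le _ _
        _ ≤ C * ‖x‖ * ‖b‖ * ‖T c‖ := by gcongr; exact h x b
        _ = C * ‖b‖ * ‖T c‖ * ‖x‖ := by ring
    have h3 : ‖T (x * (b * c)) - T x * T (b * c)‖ ≤ C * ‖b * c‖ * ‖x‖ := by
      calc ‖T (x * (b * c)) - T x * T (b * c)‖ ≤ C * ‖x‖ * ‖b * c‖ := h x (b * c)
        _ = C * ‖b * c‖ * ‖x‖ := by ring
    calc ‖_ + _ - _‖ ≤ ‖T (x * b * c) - T (x * b) * T c‖ +
          ‖(T (x * b) - T x * T b) * T c‖ + ‖T (x * (b * c)) - T x * T (b * c)‖ := by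
          refine (norm_sub_le _ _).trans ?_
          gcongr
          exact norm_add_le _ _
      _ ≤ C * ‖b‖ * ‖c‖ * ‖x‖ + C * ‖b‖ * ‖T c‖ * ‖x‖ + C * ‖b * c‖ * ‖x‖ := by
          gcongr
      _ = (C * ‖b‖ * ‖c‖ + C * ‖b‖ * ‖T c‖ + C * ‖b * c‖) * ‖x‖ := by ring
  exact (LinearMap.mkContinuous ((LinearMap.mulRight 𝕜 d).comp T) _ bound).continuous
end

section
/- Let T : A → B be a generalised homomorphism between Banach algebras, i.e. there is C > 0 with ‖T(ab) − T(a)T(b)‖ ≤ C‖a‖‖b‖ for all a,b. Then the trilinear map (a,b,c) ↦ T(abc) − T(a)T(b)T(c) is jointly continuous; that is, there exists K > 0 with ‖T(abc) − T(a)T(b)T(c)‖ ≤ K‖a‖‖b‖‖c‖ for all a,b,c ∈ A. -/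
open Filter Topology

theorem stmt1 {𝕜 A B : Type*} [RCLike 𝕜]
    [NormedRing A] [NormedRing B] [NormedAlgebra 𝕜 A] [NormedAlgebra 𝕜 B]
    [CompleteSpace A] [CompleteSpace B]
    (T : A →ₗ[𝕜] B) (C : ℝ) (hC : 0 < C)
    (h : ∀ a b : A, ‖T (a * b) - T a * T b‖ ≤ C * ‖a‖ * ‖b‖) :
    ∃ K > 0, ∀ a b c : A,
      ‖T (a * b * c) - T a * T b * T c‖ ≤ K * ‖a‖ * ‖b‖ * ‖c‖ := by
  -- decomposition 2 : continuity in c for fixed a, b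
  have key2 : ∀ a b c : A,
      ‖T (a * b * c) - T a * T b * T c‖ ≤ (C * ‖a‖ + C * ‖T a‖) * ‖b‖ * ‖c‖ := by
    intro a b c
    have e : T (a * b * c) - T a * T b * T c
        = (T (a * (b * c)) - T a * T (b * c)) + T a * (T (b * c) - T b * T c) := by
      rw [mul_sub, mul_assoc a b c, ← mul_assoc (T a) (T b) (T c)]
      abel
    rw [e]
    calc ‖(T (a * (b * c)) - T a * T (b * c)) + T a * (T (b * c) - T b * T c)‖
        ≤ ‖T (a * (b * c)) - T a * T (b * c)‖ + ‖T a * (T (b * c) - T b * T c)‖ :=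
          norm_add_le _ _
      _ ≤ C * ‖a‖ * ‖b * c‖ + ‖T a‖ * (C * ‖b‖ * ‖c‖) := by
          gcongr
          · exact h a (b * c)
          · exact (norm_mul_le _ _).trans (by gcongr; exact h b c)
      _ ≤ (C * ‖a‖ + C * ‖T a‖) * ‖b‖ * ‖c‖ := by
          have hbc := norm_mul_le b c
          nlinarith [mul_le_mul_of_nonneg_left hbc (mul_nonneg hC.le (norm_nonneg a))]
  -- decomposition 1 : pointwise bound uniform over unit ball in (a,b)
  have key1 : ∀ a b c : A,
      ‖T (a * b * c) - T a * T b * T c‖ ≤ C * (‖a‖ * ‖b‖) * ‖c‖ + C * ‖a‖ * ‖b‖ * ‖T c‖ := by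
    intro a b c
    have e : T (a * b * c) - T a * T b * T c
        = (T (a * b * c) - T (a * b) * T c) + (T (a * b) - T a * T b) * T c := by
      rw [sub_mul]; abel
    rw [e]
    calc ‖(T (a * b * c) - T (a * b) * T c) + (T (a * b) - T a * T b) * T c‖
        ≤ ‖T (a * b * c) - T (a * b) * T c‖ + ‖(T (a * b) - T a * T b) * T c‖ :=
          norm_add_le _ _
      _ ≤ C * ‖a * b‖ * ‖c‖ + (C * ‖a‖ * ‖b‖) * ‖T c‖ := by
          gcongr
          · exact h (a * b) c
          · exact (norm_mul_le _ _).trans (by gcongr; exact h a b)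
      _ ≤ C * (‖a‖ * ‖b‖) * ‖c‖ + C * ‖a‖ * ‖b‖ * ‖T c‖ := by
          have hab := norm_mul_le a b
          nlinarith [mul_le_mul_of_nonneg_left hab (mul_nonneg hC.le (norm_nonneg c))]
  -- the family of continuous linear maps in c, indexed by the unit ball in (a,b)
  set ι := {p : A × A // ‖p.1‖ ≤ 1 ∧ ‖p.2‖ ≤ 1} with hι
  let F : A → A → (A →ₗ[𝕜] B) := fun a b =>
    T ∘ₗ LinearMap.mulLeft 𝕜 (a * b) - LinearMap.mulLeft 𝕜 (T a * T b) ∘ₗ T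
  have hF : ∀ a b c, F a b c = T (a * b * c) - T a * T b * T c := by
    intro a b c; simp [F, LinearMap.mulLeft, mul_assoc]
  let G : ι → (A →L[𝕜] B) := fun p =>
    LinearMap.mkContinuous (F p.1.1 p.1.2) ((C * ‖p.1.1‖ + C * ‖T p.1.1‖) * ‖p.1.2‖)
      (fun c => by rw [hF]; exact key2 p.1.1 p.1.2 c)
  have hbdd : ∀ c, ∃ M, ∀ p : ι, ‖G p c‖ ≤ M := by
    intro c
    refine ⟨C * ‖c‖ + C * ‖T c‖, fun p => ?_⟩
    obtain ⟨⟨a, b⟩, ha, hb⟩ := p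
    have : ‖G ⟨(a, b), ha, hb⟩ c‖ = ‖T (a * b * c) - T a * T b * T c‖ := by
      simp only [G, LinearMap.mkContinuous_apply, hF]
    rw [this]
    have h1 := key1 a b c
    have hab : ‖a‖ * ‖b‖ ≤ 1 := by
      calc ‖a‖ * ‖b‖ ≤ 1 * 1 := by
            exact mul_le_mul ha hb (norm_nonneg b) zero_le_one
        _ = 1 := one_mul 1
    nlinarith [mul_le_mul_of_nonneg_left hab (mul_nonneg hC.le (norm_nonneg c)),
      mul_le_mul_of_nonneg_left hab (mul_nonneg hC.le (norm_nonneg (T c)))]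
  obtain ⟨C', hC'⟩ := banach_steinhaus hbdd
  have hC'0 : 0 ≤ C' := le_trans (norm_nonneg _) (hC' ⟨(0, 0), by simp, by simp⟩)
  -- uniform bound on the unit ball
  have hball : ∀ a b c : A, ‖a‖ ≤ 1 → ‖b‖ ≤ 1 →
      ‖T (a * b * c) - T a * T b * T c‖ ≤ C' * ‖c‖ := by
    intro a b c ha hb
    have : ‖G ⟨(a, b), ha, hb⟩ c‖ = ‖T (a * b * c) - T a * T b * T c‖ := by
      simp only [G, LinearMap.mkContinuous_apply, hF]
    rw [← this]
    calc ‖G ⟨(a, b), ha, hb⟩ c‖ ≤ ‖G ⟨(a, b), ha, hb⟩‖ * ‖c‖ :=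
          (G ⟨(a, b), ha, hb⟩).le_opNorm c
      _ ≤ C' * ‖c‖ := by gcongr; exact hC' _
  refine ⟨C' + 1, by positivity, fun a b c => ?_⟩
  rcases eq_or_ne a 0 with rfl | ha0
  · simp only [zero_mul, map_zero]
    simp [norm_nonneg]
  rcases eq_or_ne b 0 with rfl | hb0
  · simp only [zero_mul, mul_zero, map_zero, mul_zero, zero_mul]
    simp
  -- normalize by homogeneity
  have hna : (0:ℝ) < ‖a‖ := norm_pos_iff.mpr ha0
  have hnb : (0:ℝ) < ‖b‖ := norm_pos_iff.mpr hb0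
  set a' : A := ((‖a‖⁻¹ : ℝ) : 𝕜) • a with ha'def
  set b' : A := ((‖b‖⁻¹ : ℝ) : 𝕜) • b with hb'def
  have hna' : ‖a'‖ ≤ 1 := by
    rw [ha'def, norm_smul, RCLike.norm_ofReal, abs_of_nonneg (by positivity)]
    rw [inv_mul_cancel₀ hna.ne']
  have hnb' : ‖b'‖ ≤ 1 := by
    rw [hb'def, norm_smul, RCLike.norm_ofReal, abs_of_nonneg (by positivity)]
    rw [inv_mul_cancel₀ hnb.ne']
  have haa : ((‖a‖ : ℝ) : 𝕜) • a' = a := by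
    rw [ha'def, smul_smul, ← RCLike.ofReal_mul, mul_inv_cancel₀ hna.ne',
      RCLike.ofReal_one, one_smul]
  have hbb : ((‖b‖ : ℝ) : 𝕜) • b' = b := by
    rw [hb'def, smul_smul, ← RCLike.ofReal_mul, mul_inv_cancel₀ hnb.ne',
      RCLike.ofReal_one, one_smul]
  have hgen : ∀ (s t : 𝕜) (x y z : A), T ((s • x) * (t • y) * z) - T (s • x) * T (t • y) * T z
      = (s * t) • (T (x * y * z) - T x * T y * T z) := by
    intro s t x y z
    simp only [map_smul, smul_mul_assoc, mul_smul_comm, smul_smul, smul_sub]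
    module
  have hhom := hgen ((‖a‖ : ℝ) : 𝕜) ((‖b‖ : ℝ) : 𝕜) a' b' c
  rw [haa, hbb] at hhom
  have hball' := hball a' b' c hna' hnb'
  rw [hhom, norm_smul, norm_mul, RCLike.norm_ofReal, RCLike.norm_ofReal,
    abs_of_nonneg hna.le, abs_of_nonneg hnb.le]
  calc ‖a‖ * ‖b‖ * ‖T (a' * b' * c) - T a' * T b' * T c‖
      ≤ ‖a‖ * ‖b‖ * (C' * ‖c‖) := by gcongr
    _ ≤ (C' + 1) * ‖a‖ * ‖b‖ * ‖c‖ := by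
        nlinarith [mul_nonneg (mul_nonneg hna.le hnb.le) (norm_nonneg c)]
end

section
/- Every generalised homomorphism T : A → B between Banach algebras is a generalised triple homomorphism when A and B are equipped with the elemental triple product {a,b,c} = (abc + cba)/2; that is, there exists K > 0 such that ‖T({a,b,c}) − {T(a),T(b),T(c)}‖ ≤ K‖a‖‖b‖‖c‖ for all a,b,c ∈ A. -/
open Filter Topology

theorem stmt2 {𝕜 A B : Type*} [RCLike 𝕜]
    [NormedRing A] [NormedRing B] [NormedAlgebra 𝕜 A] [NormedAlgebra 𝕜 B]
    [CompleteSpace A] [CompleteSpace B]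
    (T : A →ₗ[𝕜] B) (C : ℝ) (hC : 0 < C)
    (h : ∀ a b : A, ‖T (a * b) - T a * T b‖ ≤ C * ‖a‖ * ‖b‖) :
    ∃ K > 0, ∀ a b c : A,
      ‖T ((2 : 𝕜)⁻¹ • (a * b * c + c * b * a)) -
          (2 : 𝕜)⁻¹ • (T a * T b * T c + T c * T b * T a)‖
        ≤ K * ‖a‖ * ‖b‖ * ‖c‖ := by
  classical
  -- the key algebraic identity
  have key : ∀ a b c : A, (T (a*b) - T a * T b) * T c
      = T a * (T (b*c) - T b * T c) + (T (a*(b*c)) - T a * T (b*c))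
        - (T (a*b*c) - T (a*b) * T c) := by
    intro a b c
    rw [show a*b*c = a*(b*c) from mul_assoc a b c]
    noncomm_ring
  -- each map c ↦ Φ(a,b) * T c is bounded
  have bound : ∀ a b c : A,
      ‖(T (a*b) - T a * T b) * T c‖ ≤ (‖T a‖ * (C * ‖b‖) + 2 * C * (‖a‖ * ‖b‖)) * ‖c‖ := by
    intro a b c
    rw [key a b c]
    have h1 : ‖T a * (T (b*c) - T b * T c)‖ ≤ ‖T a‖ * (C * ‖b‖ * ‖c‖) := by
      calc ‖T a * (T (b*c) - T b * T c)‖ ≤ ‖T a‖ * ‖T (b*c) - T b * T c‖ := norm_mul_le _ _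
        _ ≤ ‖T a‖ * (C * ‖b‖ * ‖c‖) := by
            exact mul_le_mul_of_nonneg_left (h b c) (norm_nonneg _)
    have h2 : ‖T (a*(b*c)) - T a * T (b*c)‖ ≤ C * ‖a‖ * (‖b‖ * ‖c‖) := by
      calc ‖T (a*(b*c)) - T a * T (b*c)‖ ≤ C * ‖a‖ * ‖b*c‖ := h a (b*c)
        _ ≤ C * ‖a‖ * (‖b‖ * ‖c‖) := by
            exact mul_le_mul_of_nonneg_left (norm_mul_le b c) (by positivity)
    have h3 : ‖T (a*b*c) - T (a*b) * T c‖ ≤ C * (‖a‖ * ‖b‖) * ‖c‖ := by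
      calc ‖T (a*b*c) - T (a*b) * T c‖ ≤ C * ‖a*b‖ * ‖c‖ := h (a*b) c
        _ ≤ C * (‖a‖ * ‖b‖) * ‖c‖ :=
            mul_le_mul_of_nonneg_right
              (mul_le_mul_of_nonneg_left (norm_mul_le a b) hC.le) (norm_nonneg c)
    calc ‖T a * (T (b*c) - T b * T c) + (T (a*(b*c)) - T a * T (b*c))
          - (T (a*b*c) - T (a*b) * T c)‖
        ≤ ‖T a * (T (b*c) - T b * T c) + (T (a*(b*c)) - T a * T (b*c))‖
          + ‖T (a*b*c) - T (a*b) * T c‖ := norm_sub_le _ _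
      _ ≤ ‖T a * (T (b*c) - T b * T c)‖ + ‖T (a*(b*c)) - T a * T (b*c)‖
          + ‖T (a*b*c) - T (a*b) * T c‖ := by
            have := norm_add_le (T a * (T (b*c) - T b * T c)) (T (a*(b*c)) - T a * T (b*c))
            linarith
      _ ≤ (‖T a‖ * (C * ‖b‖) + 2 * C * (‖a‖ * ‖b‖)) * ‖c‖ := by nlinarith [h1, h2, h3]
  -- the family of continuous linear maps
  let g : A → A → (A →L[𝕜] B) := fun a b =>
    LinearMap.mkContinuous ((LinearMap.mulLeft 𝕜 (T (a*b) - T a * T b)).comp T)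
      (‖T a‖ * (C * ‖b‖) + 2 * C * (‖a‖ * ‖b‖)) (bound a b)
  have g_apply : ∀ a b c : A, g a b c = (T (a*b) - T a * T b) * T c := fun _ _ _ => rfl
  -- Banach-Steinhaus
  obtain ⟨C', hC'⟩ : ∃ C', ∀ i : {p : A × A // ‖p.1‖ ≤ 1 ∧ ‖p.2‖ ≤ 1},
      ‖g i.1.1 i.1.2‖ ≤ C' := by
    apply banach_steinhaus
    intro c
    refine ⟨C * ‖T c‖, fun i => ?_⟩
    rw [g_apply]
    calc ‖(T (i.1.1 * i.1.2) - T i.1.1 * T i.1.2) * T c‖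
        ≤ ‖T (i.1.1 * i.1.2) - T i.1.1 * T i.1.2‖ * ‖T c‖ := norm_mul_le _ _
      _ ≤ C * ‖i.1.1‖ * ‖i.1.2‖ * ‖T c‖ := by
          exact mul_le_mul_of_nonneg_right (h _ _) (norm_nonneg _)
      _ ≤ C * ‖T c‖ := by
          have h1 := i.2.1; have h2 := i.2.2
          have hx : C * ‖i.1.1‖ * ‖i.1.2‖ ≤ C := by
            calc C * ‖i.1.1‖ * ‖i.1.2‖ ≤ C * 1 * ‖i.1.2‖ :=
                  mul_le_mul_of_nonneg_right
                    (mul_le_mul_of_nonneg_left h1 hC.le) (norm_nonneg _)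
              _ ≤ C * 1 * 1 := mul_le_mul_of_nonneg_left h2 (by linarith [hC.le])
              _ = C := by ring
          exact mul_le_mul_of_nonneg_right hx (norm_nonneg _)
  have hC'0 : 0 ≤ C' := le_trans (norm_nonneg _) (hC' ⟨(0,0), by simp⟩)
  -- the main scaled bound
  have main : ∀ a b c : A, ‖(T (a*b) - T a * T b) * T c‖ ≤ C' * ‖a‖ * ‖b‖ * ‖c‖ := by
    intro a b c
    rcases eq_or_ne a 0 with rfl | ha
    · simp
    rcases eq_or_ne b 0 with rfl | hb
    · simp
    have hna : (0:ℝ) < ‖a‖ := norm_pos_iff.mpr ha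
    have hnb : (0:ℝ) < ‖b‖ := norm_pos_iff.mpr hb
    set a' : A := ((‖a‖ : 𝕜))⁻¹ • a with ha'
    set b' : A := ((‖b‖ : 𝕜))⁻¹ • b with hb'
    have hna' : ‖a'‖ = 1 := by
      rw [ha', norm_smul, norm_inv, RCLike.norm_ofReal, abs_of_pos hna,
        inv_mul_cancel₀ hna.ne']
    have hnb' : ‖b'‖ = 1 := by
      rw [hb', norm_smul, norm_inv, RCLike.norm_ofReal, abs_of_pos hnb,
        inv_mul_cancel₀ hnb.ne']
    have hstep := hC' ⟨(a', b'), by rw [hna', hnb']; exact ⟨le_refl 1, le_refl 1⟩⟩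
    have happ : ‖g a' b' c‖ ≤ C' * ‖c‖ :=
      le_trans ((g a' b').le_opNorm c) (mul_le_mul_of_nonneg_right hstep (norm_nonneg _))
    -- relate g a' b' c to (Φ a b) * T c
    have hrel : g a' b' c = (((‖a‖ : 𝕜))⁻¹ * ((‖b‖ : 𝕜))⁻¹) • ((T (a*b) - T a * T b) * T c) := by
      rw [g_apply, ha', hb']
      have : a' * b' = (((‖a‖ : 𝕜))⁻¹ * ((‖b‖ : 𝕜))⁻¹) • (a * b) := by
        rw [ha', hb', smul_mul_smul_comm]
      rw [ha', hb'] at this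
      rw [this, map_smul, map_smul, map_smul]
      rw [smul_mul_assoc, mul_smul_comm, smul_smul, ← smul_sub, smul_mul_assoc]
    have hnorm : ‖g a' b' c‖ = (‖a‖)⁻¹ * (‖b‖)⁻¹ * ‖(T (a*b) - T a * T b) * T c‖ := by
      rw [hrel, norm_smul, norm_mul, norm_inv, norm_inv, RCLike.norm_ofReal,
        RCLike.norm_ofReal, abs_of_pos hna, abs_of_pos hnb]
    rw [hnorm] at happ
    have := mul_le_mul_of_nonneg_left happ (le_of_lt (mul_pos hna hnb))
    calc ‖(T (a*b) - T a * T b) * T c‖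
        = (‖a‖ * ‖b‖) * ((‖a‖)⁻¹ * (‖b‖)⁻¹ * ‖(T (a*b) - T a * T b) * T c‖) := by
          field_simp
      _ ≤ (‖a‖ * ‖b‖) * (C' * ‖c‖) := this
      _ = C' * ‖a‖ * ‖b‖ * ‖c‖ := by ring
  -- conclude
  refine ⟨C + C' + 1, by positivity, fun a b c => ?_⟩
  have e1 : T (a*b*c) - T a * T b * T c
      = (T (a*b*c) - T (a*b) * T c) + (T (a*b) - T a * T b) * T c := by noncomm_ring
  have e2 : T (c*b*a) - T c * T b * T a
      = (T (c*b*a) - T (c*b) * T a) + (T (c*b) - T c * T b) * T a := by noncomm_ring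
  have n1 : ‖T (a*b*c) - T a * T b * T c‖ ≤ (C + C') * (‖a‖ * ‖b‖ * ‖c‖) := by
    rw [e1]
    have i1 : ‖T (a*b*c) - T (a*b) * T c‖ ≤ C * (‖a‖ * ‖b‖) * ‖c‖ := by
      calc ‖T (a*b*c) - T (a*b) * T c‖ ≤ C * ‖a*b‖ * ‖c‖ := h (a*b) c
        _ ≤ C * (‖a‖ * ‖b‖) * ‖c‖ :=
            mul_le_mul_of_nonneg_right
              (mul_le_mul_of_nonneg_left (norm_mul_le a b) hC.le) (norm_nonneg c)
    have i2 := main a b c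
    calc ‖(T (a*b*c) - T (a*b) * T c) + (T (a*b) - T a * T b) * T c‖
        ≤ ‖T (a*b*c) - T (a*b) * T c‖ + ‖(T (a*b) - T a * T b) * T c‖ := norm_add_le _ _
      _ ≤ (C + C') * (‖a‖ * ‖b‖ * ‖c‖) := by nlinarith [i1, i2]
  have n2 : ‖T (c*b*a) - T c * T b * T a‖ ≤ (C + C') * (‖a‖ * ‖b‖ * ‖c‖) := by
    rw [e2]
    have i1 : ‖T (c*b*a) - T (c*b) * T a‖ ≤ C * (‖c‖ * ‖b‖) * ‖a‖ := by
      calc ‖T (c*b*a) - T (c*b) * T a‖ ≤ C * ‖c*b‖ * ‖a‖ := h (c*b) a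
        _ ≤ C * (‖c‖ * ‖b‖) * ‖a‖ :=
            mul_le_mul_of_nonneg_right
              (mul_le_mul_of_nonneg_left (norm_mul_le c b) hC.le) (norm_nonneg a)
    have i2 := main c b a
    calc ‖(T (c*b*a) - T (c*b) * T a) + (T (c*b) - T c * T b) * T a‖
        ≤ ‖T (c*b*a) - T (c*b) * T a‖ + ‖(T (c*b) - T c * T b) * T a‖ := norm_add_le _ _
      _ ≤ (C + C') * (‖a‖ * ‖b‖ * ‖c‖) := by nlinarith [i1, i2]
  have edecomp : T ((2 : 𝕜)⁻¹ • (a * b * c + c * b * a)) -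
      (2 : 𝕜)⁻¹ • (T a * T b * T c + T c * T b * T a)
      = (2 : 𝕜)⁻¹ • ((T (a*b*c) - T a * T b * T c) + (T (c*b*a) - T c * T b * T a)) := by
    rw [map_smul, map_add]
    module
  rw [edecomp]
  have hhalf : ‖(2 : 𝕜)⁻¹‖ = 2⁻¹ := by
    rw [norm_inv]
    norm_num [RCLike.norm_ofNat]
  calc ‖(2 : 𝕜)⁻¹ • ((T (a*b*c) - T a * T b * T c) + (T (c*b*a) - T c * T b * T a))‖
      = 2⁻¹ * ‖(T (a*b*c) - T a * T b * T c) + (T (c*b*a) - T c * T b * T a)‖ := by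
        rw [norm_smul, hhalf]
    _ ≤ 2⁻¹ * (‖T (a*b*c) - T a * T b * T c‖ + ‖T (c*b*a) - T c * T b * T a‖) := by
        have := norm_add_le (T (a*b*c) - T a * T b * T c) (T (c*b*a) - T c * T b * T a)
        linarith
    _ ≤ (C + C' + 1) * ‖a‖ * ‖b‖ * ‖c‖ := by
        have hP : (0:ℝ) ≤ ‖a‖ * ‖b‖ * ‖c‖ := by positivity
        nlinarith [n1, n2, hP]
end

section
/- Let T : A → B be a generalised *-homomorphism between Banach *-algebras, i.e. T is a generalised homomorphism and the map S(a) = T(a*)* − T(a) is continuous. Then T is a generalised triple homomorphism for the triple products {a,b,c} = (ab*c + cb*a)/2 on A and B: there exists K > 0 with ‖T({a,b,c}) − {T(a),T(b),T(c)}‖ ≤ K‖a‖‖b‖‖c‖ for all a,b,c. -/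
/-!
Write `E(a, b) = T(ab) - T(a)T(b)`, `S(a) = T(a*)* - T(a)` and `D(a, b, c)` for twice the triple
defect. Then `D` is an explicit combination of `E`, `S` and `T`, and `S` is bounded (continuous and
additive). The unbounded factors `T(a)` in that combination only meet `S(b*)` and `E(c, b*)`. The
open mapping theorem, applied to the projection of the closure of the graph of `T` onto `A`, splits
`T(a) = y + z` with `‖y‖ ≤ K‖a‖` and `z` in the separating space of `T`, and a limit argument
shows that `z` annihilates every `S(d)` and `E(c, d)`.
Hence `‖D(a, b, c)‖ ≤ (K₁‖c‖ + K₂‖T c‖)‖a‖‖b‖`; by the symmetry `D(a, b, c) = D(c, b, a)` every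
`c ↦ D(a, b, c)` is continuous, and the uniform boundedness principle yields a joint bound.
-/

open Filter Topology

section RealScalars

variable {𝕜 V : Type*} [RCLike 𝕜] [NormedAddCommGroup V] [NormedSpace 𝕜 V]

/-- Without a `StarModule` instance `star` is only additive; being continuous, it is `ℝ`-linear. -/
theorem star_ofReal_smul [StarAddMonoid V] [NormedStarGroup V] (r : ℝ) (x : V) :
    star ((r : 𝕜) • x) = (r : 𝕜) • star x := by
  let _ : NormedSpace ℝ V := NormedSpace.restrictScalars ℝ 𝕜 V
  exact map_real_smul (starAddEquiv : V ≃+ V) continuous_star r x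

theorem le_mul_norm_of_forall_norm_le_one {g : V → ℝ}
    (hg : ∀ (r : ℝ) (x : V), 0 ≤ r → g ((r : 𝕜) • x) = r * g x) {M : ℝ}
    (hM : ∀ x, ‖x‖ ≤ 1 → g x ≤ M) (x : V) : g x ≤ M * ‖x‖ := by
  rcases eq_or_ne x 0 with rfl | hx
  · simp [show g 0 = 0 by simpa using hg 0 0 le_rfl]
  have hx' : 0 < ‖x‖ := norm_pos_iff.2 hx
  have hunit : ‖((‖x‖⁻¹ : ℝ) : 𝕜) • x‖ ≤ 1 := by
    rw [norm_smul, RCLike.norm_ofReal, abs_inv, abs_norm, inv_mul_cancel₀ hx'.ne']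
  calc g x = g (((‖x‖ : ℝ) : 𝕜) • ((‖x‖⁻¹ : ℝ) : 𝕜) • x) := by
        rw [smul_smul, ← RCLike.ofReal_mul, mul_inv_cancel₀ hx'.ne', RCLike.ofReal_one, one_smul]
    _ = ‖x‖ * g (((‖x‖⁻¹ : ℝ) : 𝕜) • x) := hg _ _ (norm_nonneg x)
    _ ≤ ‖x‖ * M := by gcongr; exact hM _ hunit
    _ = M * ‖x‖ := mul_comm _ _

end RealScalars

namespace LinearMap

section SeparatingSpace

variable {R E F : Type*} [Semiring R] [AddCommGroup E] [Module R E] [TopologicalSpace E]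
  [AddCommGroup F] [Module R F] [TopologicalSpace F]

def separatingSpace (T : E →ₗ[R] F) : Set F :=
  {z | ((0 : E), z) ∈ closure (T.graph : Set (E × F))}

theorem apply_eq_of_mem_separatingSpace (T : E →ₗ[R] F) {Z : Type*} [TopologicalSpace Z]
    [T2Space Z] {L : F → Z} (hL : Continuous L) {G : E → Z} {w : Z} (hG : Tendsto G (𝓝 0) (𝓝 w))
    (hLG : ∀ x, L (T x) = G x) {z : F} (hz : z ∈ T.separatingSpace) : L z = w := by
  have := mem_closure_iff_nhdsWithin_neBot.1 hz
  have hsnd : Tendsto (fun p : E × F => L p.2) (𝓝[T.graph] (0, z)) (𝓝 (L z)) :=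
    ((hL.comp continuous_snd).tendsto _).mono_left nhdsWithin_le_nhds
  have hfst : Tendsto (fun p : E × F => G p.1) (𝓝[T.graph] (0, z)) (𝓝 w) :=
    hG.comp ((continuous_fst.tendsto _).mono_left nhdsWithin_le_nhds)
  refine tendsto_nhds_unique (hsnd.congr' ?_) hfst
  filter_upwards [self_mem_nhdsWithin] with p hp
  rw [(mem_graph_iff T p).1 hp, hLG]

theorem exists_norm_le_sub_mem_separatingSpace {𝕜 E F : Type*} [NontriviallyNormedField 𝕜]
    [NormedAddCommGroup E] [NormedSpace 𝕜 E] [CompleteSpace E]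
    [NormedAddCommGroup F] [NormedSpace 𝕜 F] [CompleteSpace F] (T : E →ₗ[𝕜] F) :
    ∃ K, ∀ x, ∃ y, ‖y‖ ≤ K * ‖x‖ ∧ T x - y ∈ T.separatingSpace := by
  set G := T.graph.topologicalClosure
  have : CompleteSpace G := (Submodule.isClosed_topologicalClosure _).completeSpace_coe
  have hgraph : ∀ x, (x, T x) ∈ G := fun x =>
    Submodule.le_topologicalClosure _ ((mem_graph_iff T _).2 rfl)
  let p : G →L[𝕜] E := (ContinuousLinearMap.fst 𝕜 E F).comp G.subtypeL
  obtain ⟨K, -, hK⟩ := p.exists_preimage_norm_le fun x => ⟨⟨_, hgraph x⟩, rfl⟩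
  refine ⟨K, fun x => ?_⟩
  obtain ⟨g, rfl, hg⟩ := hK x
  refine ⟨(g : E × F).2, (norm_snd_le _).trans hg, ?_⟩
  have hpair : ((0 : E), T (p g) - g.1.2) = (g.1.1, T g.1.1) - g.1 := by
    ext <;> simp [p]
  change _ ∈ closure _
  rw [← Submodule.topologicalClosure_coe, hpair]
  exact G.sub_mem (hgraph _) g.2

end SeparatingSpace

section Defects

variable {R A B : Type*} [CommSemiring R] [Ring A] [Ring B] [Algebra R A] [Algebra R B]
  (T : A →ₗ[R] B)

def mulDefect (a b : A) : B := T (a * b) - T a * T b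

theorem mulDefect_mul_apply (c d a : A) :
    T.mulDefect c d * T a =
      T.mulDefect c (d * a) - T.mulDefect (c * d) a + T c * T.mulDefect d a := by
  simp only [mulDefect, ← mul_assoc]
  noncomm_ring

variable [StarRing A] [StarRing B]

def starDefect (a : A) : B := star (T (star a)) - T a

def tripleDefect (a b c : A) : B :=
  T (a * star b * c + c * star b * a) - (T a * star (T b) * T c + T c * star (T b) * T a)

theorem starDefect_zero : T.starDefect 0 = 0 := by simp [starDefect]

theorem starDefect_add (x y : A) : T.starDefect (x + y) = T.starDefect x + T.starDefect y := by
  simp only [starDefect, star_add, map_add]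
  abel

theorem star_apply (b : A) : star (T b) = T.starDefect (star b) + T (star b) := by
  rw [starDefect, star_star, sub_add_cancel]

theorem star_mulDefect_star (a d : A) :
    star (T.mulDefect (star d) (star a)) =
      T.starDefect (a * d) + T (a * d) - (T.starDefect a + T a) * (T.starDefect d + T d) := by
  simp only [mulDefect, starDefect, star_sub, ← star_mul, sub_add_cancel]

theorem apply_mul_starDefect (a d : A) :
    T a * T.starDefect d = T.mulDefect a d + T.starDefect (a * d) - T.starDefect a * T.starDefect d
      - star (T.mulDefect (star d) (star a)) - T.starDefect a * T d := by
  rw [star_mulDefect_star, mulDefect]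
  noncomm_ring

theorem starDefect_mul_apply (d a : A) :
    T.starDefect d * T a = T.mulDefect d a + T.starDefect (d * a) - T.starDefect d * T.starDefect a
      - star (T.mulDefect (star a) (star d)) - T d * T.starDefect a := by
  rw [star_mulDefect_star, mulDefect]
  noncomm_ring

theorem tripleDefect_eq_mulDefect_starDefect (a b c : A) :
    T.tripleDefect a b c =
      T.mulDefect a (star b) * T c + T.mulDefect (a * star b) c + T.mulDefect (c * star b) a
        + T.mulDefect c (star b) * T a - T a * (T.starDefect (star b) * T c)
        - T c * T.starDefect (star b) * T a := by
  rw [tripleDefect, star_apply, map_add]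
  simp only [mulDefect]
  noncomm_ring

theorem tripleDefect_comm (a b c : A) : T.tripleDefect a b c = T.tripleDefect c b a := by
  rw [tripleDefect, tripleDefect, add_comm (a * star b * c), add_comm (T a * star (T b) * T c)]

theorem tripleDefect_add_left (a₁ a₂ b c : A) :
    T.tripleDefect (a₁ + a₂) b c = T.tripleDefect a₁ b c + T.tripleDefect a₂ b c := by
  simp only [tripleDefect, map_add, mul_add, add_mul]
  abel

theorem tripleDefect_smul_left (s : R) (a b c : A) :
    T.tripleDefect (s • a) b c = s • T.tripleDefect a b c := by
  simp only [tripleDefect, smul_mul_assoc, mul_smul_comm, ← smul_add, map_smul, smul_sub]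

theorem tripleDefect_add_right (a b c₁ c₂ : A) :
    T.tripleDefect a b (c₁ + c₂) = T.tripleDefect a b c₁ + T.tripleDefect a b c₂ := by
  simp only [tripleDefect_comm T a b, tripleDefect_add_left]

theorem tripleDefect_smul_right (s : R) (a b c : A) :
    T.tripleDefect a b (s • c) = s • T.tripleDefect a b c := by
  simp only [tripleDefect_comm T a b, tripleDefect_smul_left]

end Defects

section Annihilation

variable {R A B : Type*} [CommSemiring R] [NormedRing A] [NormedRing B] [Algebra R A] [Algebra R B]
  (T : A →ₗ[R] B) {C : ℝ}

theorem tendsto_mulDefect_left (hE : ∀ a b, ‖T.mulDefect a b‖ ≤ C * ‖a‖ * ‖b‖) (d : A) :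
    Tendsto (fun x => T.mulDefect x d) (𝓝 0) (𝓝 0) :=
  squeeze_zero_norm (fun x => hE x d) <|
    (by fun_prop : Continuous fun x : A => C * ‖x‖ * ‖d‖).tendsto' 0 0 (by simp)

theorem tendsto_mulDefect_right (hE : ∀ a b, ‖T.mulDefect a b‖ ≤ C * ‖a‖ * ‖b‖) (d : A) :
    Tendsto (fun x => T.mulDefect d x) (𝓝 0) (𝓝 0) :=
  squeeze_zero_norm (fun x => hE d x) <|
    (by fun_prop : Continuous fun x : A => C * ‖d‖ * ‖x‖).tendsto' 0 0 (by simp)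

theorem mulDefect_mul_eq_zero (hE : ∀ a b, ‖T.mulDefect a b‖ ≤ C * ‖a‖ * ‖b‖) {z : B}
    (hz : z ∈ T.separatingSpace) (c d : A) : T.mulDefect c d * z = 0 := by
  refine T.apply_eq_of_mem_separatingSpace (continuous_const_mul _) ?_
    (fun x => T.mulDefect_mul_apply c d x) hz
  have hdx : Tendsto (fun x => T.mulDefect c (d * x)) (𝓝 0) (𝓝 0) :=
    (tendsto_mulDefect_right T hE c).comp ((continuous_const_mul d).tendsto' 0 0 (mul_zero d))
  simpa using (hdx.sub (tendsto_mulDefect_right T hE (c * d))).add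
    ((tendsto_mulDefect_right T hE d).const_mul (T c))

variable [StarRing A] [NormedStarGroup A] [StarRing B] [NormedStarGroup B]

theorem mul_starDefect_eq_zero (hE : ∀ a b, ‖T.mulDefect a b‖ ≤ C * ‖a‖ * ‖b‖)
    (hS : Continuous T.starDefect) {z : B} (hz : z ∈ T.separatingSpace) (d : A) :
    z * T.starDefect d = 0 := by
  have hS0 := hS.tendsto' 0 0 T.starDefect_zero
  refine T.apply_eq_of_mem_separatingSpace (continuous_mul_const _) ?_
    (fun x => T.apply_mul_starDefect x d) hz
  have hxd : Tendsto (fun x => T.starDefect (x * d)) (𝓝 0) (𝓝 0) :=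
    hS0.comp ((continuous_mul_const d).tendsto' 0 0 (zero_mul d))
  have hstar : Tendsto (fun x => star (T.mulDefect (star d) (star x))) (𝓝 0) (𝓝 0) := by
    simpa using ((tendsto_mulDefect_right T hE (star d)).comp
      (continuous_star.tendsto' 0 0 (star_zero A))).star
  simpa using ((((tendsto_mulDefect_left T hE d).add hxd).sub (hS0.mul_const _)).sub hstar).sub
    (hS0.mul_const _)

theorem starDefect_mul_eq_zero (hE : ∀ a b, ‖T.mulDefect a b‖ ≤ C * ‖a‖ * ‖b‖)
    (hS : Continuous T.starDefect) {z : B} (hz : z ∈ T.separatingSpace) (d : A) :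
    T.starDefect d * z = 0 := by
  have hS0 := hS.tendsto' 0 0 T.starDefect_zero
  refine T.apply_eq_of_mem_separatingSpace (continuous_const_mul _) ?_
    (fun x => T.starDefect_mul_apply d x) hz
  have hdx : Tendsto (fun x => T.starDefect (d * x)) (𝓝 0) (𝓝 0) :=
    hS0.comp ((continuous_const_mul d).tendsto' 0 0 (mul_zero d))
  have hstar : Tendsto (fun x => star (T.mulDefect (star x) (star d))) (𝓝 0) (𝓝 0) := by
    simpa using ((tendsto_mulDefect_left T hE (star d)).comp
      (continuous_star.tendsto' 0 0 (star_zero A))).star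
  simpa using ((((tendsto_mulDefect_right T hE d).add hdx).sub (hS0.const_mul _)).sub hstar).sub
    (hS0.const_mul _)

theorem tripleDefect_eq_of_sub_mem_separatingSpace
    (hE : ∀ a b, ‖T.mulDefect a b‖ ≤ C * ‖a‖ * ‖b‖) (hS : Continuous T.starDefect) {a : A} {y : B}
    (hy : T a - y ∈ T.separatingSpace) (b c : A) :
    T.tripleDefect a b c =
      T.mulDefect a (star b) * T c + T.mulDefect (a * star b) c + T.mulDefect (c * star b) a
        + T.mulDefect c (star b) * y - y * (T.starDefect (star b) * T c)
        - T c * T.starDefect (star b) * y := by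
  rw [T.tripleDefect_eq_mulDefect_starDefect, ← add_sub_cancel y (T a), mul_add, add_mul, mul_add,
    T.mulDefect_mul_eq_zero hE hy, ← mul_assoc (T a - y), T.mul_starDefect_eq_zero hE hS hy,
    mul_assoc _ _ (T a - y), T.starDefect_mul_eq_zero hE hS hy]
  simp only [add_zero, zero_mul, mul_zero]

end Annihilation

section TripleProduct

variable {𝕜 A B : Type*} [RCLike 𝕜] [NormedRing A] [NormedRing B] [NormedAlgebra 𝕜 A]
  [NormedAlgebra 𝕜 B] [StarRing A] [StarRing B] (T : A →ₗ[𝕜] B) {C : ℝ}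

theorem exists_norm_starDefect_le (hS : Continuous T.starDefect) :
    ∃ M, ∀ x, ‖T.starDefect x‖ ≤ M * ‖x‖ := by
  let _ : NormedSpace ℝ A := NormedSpace.restrictScalars ℝ 𝕜 A
  let _ : NormedSpace ℝ B := NormedSpace.restrictScalars ℝ 𝕜 B
  exact ⟨_, ((AddMonoidHom.mk' _ T.starDefect_add).toRealLinearMap hS).le_opNorm⟩

variable [NormedStarGroup A] [NormedStarGroup B]

theorem exists_norm_tripleDefect_le_mul_norm_mul_norm [CompleteSpace A] [CompleteSpace B]
    (hC : 0 ≤ C) (hE : ∀ a b, ‖T.mulDefect a b‖ ≤ C * ‖a‖ * ‖b‖) (hS : Continuous T.starDefect) :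
    ∃ K₁ K₂ : ℝ, ∀ a b c, ‖T.tripleDefect a b c‖ ≤ (K₁ * ‖c‖ + K₂ * ‖T c‖) * ‖a‖ * ‖b‖ := by
  obtain ⟨M, hM⟩ := T.exists_norm_starDefect_le hS
  obtain ⟨K, hK⟩ := T.exists_norm_le_sub_mem_separatingSpace
  refine ⟨2 * C + C * K, C + 2 * K * M, fun a b c => ?_⟩
  obtain ⟨y, hy, hya⟩ := hK a
  have hEb : ∀ x, ‖T.mulDefect x (star b)‖ ≤ C * ‖x‖ * ‖b‖ := fun x => norm_star b ▸ hE x (star b)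
  have hSb : ‖T.starDefect (star b)‖ ≤ M * ‖b‖ := norm_star b ▸ hM (star b)
  have hmul : ∀ x, ‖x * star b‖ ≤ ‖x‖ * ‖b‖ := fun x => norm_star b ▸ norm_mul_le x (star b)
  have h₁ : ‖T.mulDefect a (star b) * T c‖ ≤ C * ‖a‖ * ‖b‖ * ‖T c‖ :=
    norm_mul_le_of_le (hEb a) le_rfl
  have h₂ : ‖T.mulDefect (a * star b) c‖ ≤ C * (‖a‖ * ‖b‖) * ‖c‖ :=
    (hE _ c).trans (by gcongr; exact hmul a)
  have h₃ : ‖T.mulDefect (c * star b) a‖ ≤ C * (‖c‖ * ‖b‖) * ‖a‖ :=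
    (hE _ a).trans (by gcongr; exact hmul c)
  have h₄ : ‖T.mulDefect c (star b) * y‖ ≤ C * ‖c‖ * ‖b‖ * (K * ‖a‖) := norm_mul_le_of_le (hEb c) hy
  have h₅ : ‖y * (T.starDefect (star b) * T c)‖ ≤ K * ‖a‖ * (M * ‖b‖ * ‖T c‖) :=
    norm_mul_le_of_le hy (norm_mul_le_of_le hSb le_rfl)
  have h₆ : ‖T c * T.starDefect (star b) * y‖ ≤ ‖T c‖ * (M * ‖b‖) * (K * ‖a‖) :=
    norm_mul_le_of_le (norm_mul_le_of_le le_rfl hSb) hy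
  rw [T.tripleDefect_eq_of_sub_mem_separatingSpace hE hS hya]
  exact (norm_sub_le_of_le (norm_sub_le_of_le (norm_add_le_of_le (norm_add_le_of_le
    (norm_add_le_of_le h₁ h₂) h₃) h₄) h₅) h₆).trans_eq (by ring)

theorem tripleDefect_ofReal_smul_middle (r : ℝ) (a b c : A) :
    T.tripleDefect a ((r : 𝕜) • b) c = (r : 𝕜) • T.tripleDefect a b c := by
  simp only [tripleDefect, star_ofReal_smul, map_smul, smul_mul_assoc, mul_smul_comm, ← smul_add,
    smul_sub]

theorem exists_norm_tripleDefect_le_of_norm_le_one [CompleteSpace A] [CompleteSpace B]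
    (hC : 0 ≤ C) (hE : ∀ a b, ‖T.mulDefect a b‖ ≤ C * ‖a‖ * ‖b‖) (hS : Continuous T.starDefect) :
    ∃ M, ∀ a b c, ‖a‖ ≤ 1 → ‖b‖ ≤ 1 → ‖T.tripleDefect a b c‖ ≤ M * ‖c‖ := by
  obtain ⟨K₁, K₂, hK⟩ := T.exists_norm_tripleDefect_le_mul_norm_mul_norm hC hE hS
  let g (p : {p : A × A // ‖p.1‖ ≤ 1 ∧ ‖p.2‖ ≤ 1}) : A →L[𝕜] B :=
    LinearMap.mkContinuous
      { toFun := T.tripleDefect p.1.1 p.1.2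
        map_add' := T.tripleDefect_add_right p.1.1 p.1.2
        map_smul' := fun s c => T.tripleDefect_smul_right s p.1.1 p.1.2 c }
      ((K₁ * ‖p.1.1‖ + K₂ * ‖T p.1.1‖) * ‖p.1.2‖)
      (fun c => (T.tripleDefect_comm _ _ c ▸ hK c p.1.2 p.1.1).trans_eq (by ring))
  have hbounded (c : A) : ∃ M, ∀ p, ‖g p c‖ ≤ M := by
    refine ⟨|K₁ * ‖c‖ + K₂ * ‖T c‖|, fun ⟨⟨a, b⟩, ha, hb⟩ => ?_⟩
    calc ‖T.tripleDefect a b c‖ ≤ (K₁ * ‖c‖ + K₂ * ‖T c‖) * ‖a‖ * ‖b‖ := hK a b c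
      _ ≤ |K₁ * ‖c‖ + K₂ * ‖T c‖| * ‖a‖ * ‖b‖ := by gcongr; exact le_abs_self _
      _ ≤ |K₁ * ‖c‖ + K₂ * ‖T c‖| * 1 * 1 := by gcongr
      _ = |K₁ * ‖c‖ + K₂ * ‖T c‖| := by ring
  obtain ⟨M, hM⟩ := banach_steinhaus hbounded
  exact ⟨M, fun a b c ha hb => ((g ⟨(a, b), ha, hb⟩).le_opNorm c).trans (by gcongr; exact hM _)⟩

theorem exists_norm_tripleDefect_le [CompleteSpace A] [CompleteSpace B]
    (hC : 0 ≤ C) (hE : ∀ a b, ‖T.mulDefect a b‖ ≤ C * ‖a‖ * ‖b‖) (hS : Continuous T.starDefect) :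
    ∃ K, ∀ a b c, ‖T.tripleDefect a b c‖ ≤ K * ‖a‖ * ‖b‖ * ‖c‖ := by
  obtain ⟨M, hM⟩ := T.exists_norm_tripleDefect_le_of_norm_le_one hC hE hS
  have hnorm (r : ℝ) (hr : 0 ≤ r) (x : B) : ‖(r : 𝕜) • x‖ = r * ‖x‖ := by
    rw [norm_smul, RCLike.norm_ofReal, abs_of_nonneg hr]
  have ha (a b c : A) (hb : ‖b‖ ≤ 1) : ‖T.tripleDefect a b c‖ ≤ M * ‖c‖ * ‖a‖ :=
    le_mul_norm_of_forall_norm_le_one (g := fun a => ‖T.tripleDefect a b c‖)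
      (fun r x hr => by rw [tripleDefect_smul_left, hnorm r hr])
      (fun a ha => hM a b c ha hb) a
  have hab (a b c : A) : ‖T.tripleDefect a b c‖ ≤ M * ‖c‖ * ‖a‖ * ‖b‖ :=
    le_mul_norm_of_forall_norm_le_one (g := fun b => ‖T.tripleDefect a b c‖)
      (fun r x hr => by rw [tripleDefect_ofReal_smul_middle, hnorm r hr])
      (fun b hb => ha a b c hb) b
  exact ⟨M, fun a b c => (hab a b c).trans_eq (by ring)⟩

end TripleProduct

end LinearMap

theorem stmt3 {𝕜 A B : Type*} [RCLike 𝕜]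
    [NormedRing A] [NormedRing B] [NormedAlgebra 𝕜 A] [NormedAlgebra 𝕜 B]
    [CompleteSpace A] [CompleteSpace B]
    [StarRing A] [NormedStarGroup A] [StarRing B] [NormedStarGroup B]
    (T : A →ₗ[𝕜] B) (C : ℝ) (hC : 0 < C)
    (h : ∀ a b : A, ‖T (a * b) - T a * T b‖ ≤ C * ‖a‖ * ‖b‖)
    (hS : Continuous fun a : A => star (T (star a)) - T a) :
    ∃ K > 0, ∀ a b c : A,
      ‖T ((2 : 𝕜)⁻¹ • (a * star b * c + c * star b * a)) -
          (2 : 𝕜)⁻¹ • (T a * star (T b) * T c + T c * star (T b) * T a)‖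
        ≤ K * ‖a‖ * ‖b‖ * ‖c‖ := by
  obtain ⟨K, hK⟩ := T.exists_norm_tripleDefect_le hC.le h hS
  refine ⟨max K 1, by positivity, fun a b c => ?_⟩
  calc _ = ‖(2 : 𝕜)⁻¹ • T.tripleDefect a b c‖ := by rw [LinearMap.tripleDefect, map_smul, smul_sub]
    _ ≤ ‖T.tripleDefect a b c‖ := by
        rw [norm_smul]
        exact mul_le_of_le_one_left (norm_nonneg _) (by norm_num)
    _ ≤ K * ‖a‖ * ‖b‖ * ‖c‖ := hK a b c
    _ ≤ max K 1 * ‖a‖ * ‖b‖ * ‖c‖ := by gcongr; exact le_max_left K 1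
end

section
/- Let T : E → F be a generalised triple homomorphism between Jordan Banach triples, and let z ∈ σ(T), the separating space of T. Then for all a, b ∈ E one has {T(a), z, T(b)} ∈ σ(T), {z, T(a), T(b)} ∈ σ(T), and {T(a), T(b), z} ∈ σ(T). -/
open Filter Topology

/-- A (real) Jordan Banach triple: a Banach space with a continuous triple
product, (real-)linear in each variable, symmetric in the outer variables and
satisfying the Jordan identity. -/
structure JordanBanachTriple (E : Type*) [NormedAddCommGroup E] [NormedSpace ℝ E] where
  tp : E → E → E → E
  add_left : ∀ a a' b c, tp (a + a') b c = tp a b c + tp a' b c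
  smul_left : ∀ (r : ℝ) a b c, tp (r • a) b c = r • tp a b c
  add_mid : ∀ a b b' c, tp a (b + b') c = tp a b c + tp a b' c
  smul_mid : ∀ (r : ℝ) a b c, tp a (r • b) c = r • tp a b c
  symm : ∀ a b c, tp a b c = tp c b a
  jordan : ∀ a b x y z,
    tp a b (tp x y z) = tp (tp a b x) y z - tp x (tp b a y) z + tp x y (tp a b z)
  bound : ∃ C > 0, ∀ a b c, ‖tp a b c‖ ≤ C * ‖a‖ * ‖b‖ * ‖c‖

def sepSpace {X Y : Type*} [NormedAddCommGroup X] [NormedAddCommGroup Y]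
    (T : X → Y) : Set Y :=
  {z | ∃ x : ℕ → X, Tendsto x atTop (𝓝 0) ∧ Tendsto (fun n => T (x n)) atTop (𝓝 z)}

lemma jbt_sub_mid {F : Type*} [NormedAddCommGroup F] [NormedSpace ℝ F]
    (J : JordanBanachTriple F) (a b b' c : F) :
    J.tp a (b - b') c = J.tp a b c - J.tp a b' c := by
  have hneg : J.tp a (-b') c = -J.tp a b' c := by
    have := J.smul_mid (-1) a b' c
    simpa using this
  rw [sub_eq_add_neg, J.add_mid, hneg, sub_eq_add_neg]

lemma jbt_sub_left {F : Type*} [NormedAddCommGroup F] [NormedSpace ℝ F]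
    (J : JordanBanachTriple F) (a a' b c : F) :
    J.tp (a - a') b c = J.tp a b c - J.tp a' b c := by
  have hneg : J.tp (-a') b c = -J.tp a' b c := by
    have := J.smul_left (-1) a' b c
    simpa using this
  rw [sub_eq_add_neg, J.add_left, hneg, sub_eq_add_neg]

lemma jbt_tendsto_mid {F : Type*} [NormedAddCommGroup F] [NormedSpace ℝ F]
    (J : JordanBanachTriple F) (p q : F) {u : ℕ → F} {l : F}
    (hu : Tendsto u atTop (𝓝 l)) :
    Tendsto (fun n => J.tp p (u n) q) atTop (𝓝 (J.tp p l q)) := by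
  obtain ⟨D, hD, hb⟩ := J.bound
  rw [tendsto_iff_norm_sub_tendsto_zero]
  have key : ∀ n, ‖J.tp p (u n) q - J.tp p l q‖ ≤ D * ‖p‖ * ‖u n - l‖ * ‖q‖ := by
    intro n
    rw [← jbt_sub_mid]
    exact hb p (u n - l) q
  have hul : Tendsto (fun n => ‖u n - l‖) atTop (𝓝 0) := by
    rw [← tendsto_iff_norm_sub_tendsto_zero] ; exact hu
  have hrhs : Tendsto (fun n => D * ‖p‖ * ‖u n - l‖ * ‖q‖) atTop (𝓝 0) := by
    have := (hul.const_mul (D * ‖p‖)).mul_const ‖q‖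
    simpa [mul_assoc] using this
  exact squeeze_zero (fun n => norm_nonneg _) key hrhs

lemma jbt_tendsto_left {F : Type*} [NormedAddCommGroup F] [NormedSpace ℝ F]
    (J : JordanBanachTriple F) (p q : F) {u : ℕ → F} {l : F}
    (hu : Tendsto u atTop (𝓝 l)) :
    Tendsto (fun n => J.tp (u n) p q) atTop (𝓝 (J.tp l p q)) := by
  obtain ⟨D, hD, hb⟩ := J.bound
  rw [tendsto_iff_norm_sub_tendsto_zero]
  have key : ∀ n, ‖J.tp (u n) p q - J.tp l p q‖ ≤ D * ‖u n - l‖ * ‖p‖ * ‖q‖ := by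
    intro n
    rw [← jbt_sub_left]
    exact hb (u n - l) p q
  have hul : Tendsto (fun n => ‖u n - l‖) atTop (𝓝 0) := by
    rw [← tendsto_iff_norm_sub_tendsto_zero] ; exact hu
  have hrhs : Tendsto (fun n => D * ‖u n - l‖ * ‖p‖ * ‖q‖) atTop (𝓝 0) := by
    have := ((hul.const_mul D).mul_const ‖p‖).mul_const ‖q‖
    simpa [mul_assoc] using this
  exact squeeze_zero (fun n => norm_nonneg _) key hrhs

theorem stmt8 {E F : Type*}
    [NormedAddCommGroup E] [NormedSpace ℝ E] [CompleteSpace E]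
    [NormedAddCommGroup F] [NormedSpace ℝ F] [CompleteSpace F]
    (JE : JordanBanachTriple E) (JF : JordanBanachTriple F)
    (T : E →ₗ[ℝ] F) (C : ℝ) (hC : 0 < C)
    (h : ∀ a b c, ‖T (JE.tp a b c) - JF.tp (T a) (T b) (T c)‖ ≤ C * ‖a‖ * ‖b‖ * ‖c‖)
    (z : F) (hz : z ∈ sepSpace T) :
    ∀ a b : E, JF.tp (T a) z (T b) ∈ sepSpace T ∧
      JF.tp z (T a) (T b) ∈ sepSpace T ∧
      JF.tp (T a) (T b) z ∈ sepSpace T := by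
  obtain ⟨x, hx0, hxz⟩ := hz
  obtain ⟨D, hD, hbE⟩ := JE.bound
  have hxn : Tendsto (fun n => ‖x n‖) atTop (𝓝 0) := by
    simpa using hx0.norm
  -- membership in the middle slot
  have mid : ∀ a b : E, JF.tp (T a) z (T b) ∈ sepSpace T := by
    intro a b
    refine ⟨fun n => JE.tp a (x n) b, ?_, ?_⟩
    · rw [tendsto_zero_iff_norm_tendsto_zero]
      have hrhs : Tendsto (fun n => D * ‖a‖ * ‖x n‖ * ‖b‖) atTop (𝓝 0) := by
        have := (hxn.const_mul (D * ‖a‖)).mul_const ‖b‖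
        simpa [mul_assoc] using this
      exact squeeze_zero (fun n => norm_nonneg _) (fun n => hbE a (x n) b) hrhs
    · have h1 : Tendsto (fun n => T (JE.tp a (x n) b) - JF.tp (T a) (T (x n)) (T b))
          atTop (𝓝 0) := by
        rw [tendsto_zero_iff_norm_tendsto_zero]
        have hrhs : Tendsto (fun n => C * ‖a‖ * ‖x n‖ * ‖b‖) atTop (𝓝 0) := by
          have := (hxn.const_mul (C * ‖a‖)).mul_const ‖b‖
          simpa [mul_assoc] using this
        exact squeeze_zero (fun n => norm_nonneg _) (fun n => h a (x n) b) hrhs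
      have h2 : Tendsto (fun n => JF.tp (T a) (T (x n)) (T b)) atTop
          (𝓝 (JF.tp (T a) z (T b))) := jbt_tendsto_mid JF (T a) (T b) hxz
      have := h1.add h2
      simpa using this
  -- membership in the left slot
  have left : ∀ a b : E, JF.tp z (T a) (T b) ∈ sepSpace T := by
    intro a b
    refine ⟨fun n => JE.tp (x n) a b, ?_, ?_⟩
    · rw [tendsto_zero_iff_norm_tendsto_zero]
      have hrhs : Tendsto (fun n => D * ‖x n‖ * ‖a‖ * ‖b‖) atTop (𝓝 0) := by
        have := ((hxn.const_mul D).mul_const ‖a‖).mul_const ‖b‖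
        simpa [mul_assoc] using this
      exact squeeze_zero (fun n => norm_nonneg _) (fun n => hbE (x n) a b) hrhs
    · have h1 : Tendsto (fun n => T (JE.tp (x n) a b) - JF.tp (T (x n)) (T a) (T b))
          atTop (𝓝 0) := by
        rw [tendsto_zero_iff_norm_tendsto_zero]
        have hrhs : Tendsto (fun n => C * ‖x n‖ * ‖a‖ * ‖b‖) atTop (𝓝 0) := by
          have := ((hxn.const_mul C).mul_const ‖a‖).mul_const ‖b‖
          simpa [mul_assoc] using this
        exact squeeze_zero (fun n => norm_nonneg _) (fun n => h (x n) a b) hrhs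
      have h2 : Tendsto (fun n => JF.tp (T (x n)) (T a) (T b)) atTop
          (𝓝 (JF.tp z (T a) (T b))) := jbt_tendsto_left JF (T a) (T b) hxz
      have := h1.add h2
      simpa using this
  intro a b
  refine ⟨mid a b, left a b, ?_⟩
  rw [JF.symm]
  exact left b a
end

section
/- Let T : E → F be a linear map between Jordan Banach triples such that the map (a,b,c) ↦ T({a,b,c}) − {T(a),T(b),T(c)} is bounded (a generalised triple homomorphism). Suppose F is anisotropic and that the restriction of T to the closed inner ideal E(a) generated by any single norm-one element a is continuous. Then every element of the separating space σ(T) satisfies z^[3] = {z,z,z} = 0, and hence T is continuous. -/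
open Filter Topology

/-! If `xₙ → 0` and `T xₙ → z`, then for every `b` the elements `{b, xₙ, b}` lie in
`E(b) = E(b / ‖b‖)` and tend to `0`, so `T {b, xₙ, b} → 0` by continuity of `T` on `E(b)`.
Since `T` is a triple homomorphism up to a bounded trilinear defect, `{T b, T xₙ, T b}`
tends to `0` as well, so `{T b, z, T b} = 0` for every `b`. Taking `b = xₙ` and letting
`n → ∞` gives `{z, z, z} = 0`. By anisotropy `σ(T) = 0`, and the closed graph theorem
makes `T` continuous. -/

namespace JordanBanachTriple

variable {G : Type*} [NormedAddCommGroup G] [NormedSpace ℝ G] (J : JordanBanachTriple G)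

lemma add_right (a b c c' : G) : J.tp a b (c + c') = J.tp a b c + J.tp a b c' := by
  rw [J.symm, J.add_left, J.symm c, J.symm c']

lemma smul_right (r : ℝ) (a b c : G) : J.tp a b (r • c) = r • J.tp a b c := by
  rw [J.symm, J.smul_left, J.symm]

lemma tp_zero_left (b c : G) : J.tp 0 b c = 0 := by
  simpa using J.smul_left 0 0 b c

lemma tp_zero_mid (a c : G) : J.tp a 0 c = 0 := by
  simpa using J.smul_mid 0 a 0 c

lemma tp_smul_smul (r : ℝ) (a b : G) : J.tp (r • a) b (r • a) = (r * r) • J.tp a b a := by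
  rw [J.smul_left, J.smul_right, smul_smul]

lemma norm_tp_le (a b c : G) : ‖J.tp a b c‖ ≤ J.bound.choose * ‖c‖ * ‖a‖ * ‖b‖ :=
  (J.bound.choose_spec.2 a b c).trans_eq (by ring)

/-- Note the order of arguments: `J.tpCLM c a b = J.tp a b c`. -/
noncomputable def tpCLM : G →L[ℝ] G →L[ℝ] G →L[ℝ] G :=
  LinearMap.mkContinuous
    { toFun := fun c => LinearMap.mkContinuous₂
        (LinearMap.mk₂ ℝ (fun a b => J.tp a b c) (fun a a' b => J.add_left a a' b c)
          (fun r a b => J.smul_left r a b c) (fun a b b' => J.add_mid a b b' c)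
          (fun r a b => J.smul_mid r a b c))
        (J.bound.choose * ‖c‖) (J.norm_tp_le · · c)
      map_add' := fun c c' => by ext; exact J.add_right _ _ _ _
      map_smul' := fun r c => by ext; exact J.smul_right _ _ _ _ }
    J.bound.choose fun c =>
      ContinuousLinearMap.opNorm_le_bound₂ _ (by have := J.bound.choose_spec.1; positivity)
        (J.norm_tp_le · · c)

lemma continuous_tp : Continuous fun p : G × G × G => J.tp p.1 p.2.1 p.2.2 :=
  ((J.tpCLM.continuous.comp (continuous_snd.comp continuous_snd)).clm_apply
    continuous_fst).clm_apply (continuous_fst.comp continuous_snd)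

lemma tendsto_tp {α : Type*} {l : Filter α} {a b c : α → G} {a₀ b₀ c₀ : G}
    (ha : Tendsto a l (𝓝 a₀)) (hb : Tendsto b l (𝓝 b₀)) (hc : Tendsto c l (𝓝 c₀)) :
    Tendsto (fun n => J.tp (a n) (b n) (c n)) l (𝓝 (J.tp a₀ b₀ c₀)) :=
  (J.continuous_tp.tendsto _).comp (ha.prodMk_nhds (hb.prodMk_nhds hc))

/-- The set `{a, G, a}`, whose closure is the inner ideal `G(a)`. -/
def quadRange (a : G) : Set G := {y | ∃ x : G, y = J.tp a x a}

lemma tp_mem_quadRange (a x : G) : J.tp a x a ∈ J.quadRange a := ⟨x, rfl⟩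

lemma quadRange_smul {r : ℝ} (hr : r ≠ 0) (a : G) : J.quadRange (r • a) = J.quadRange a := by
  ext y
  constructor
  · rintro ⟨x, rfl⟩
    exact ⟨(r * r) • x, by rw [tp_smul_smul, J.smul_mid]⟩
  · rintro ⟨x, rfl⟩
    refine ⟨(r⁻¹ * r⁻¹) • x, ?_⟩
    rw [tp_smul_smul, J.smul_mid, smul_smul]
    field_simp
    rw [one_smul]

lemma quadRange_zero : J.quadRange 0 = {0} := by
  ext y
  simp [quadRange, tp_zero_left]

lemma continuousOn_closure_quadRange {Y : Type*} [TopologicalSpace Y] {T : G → Y}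
    (hT : ∀ a : G, ‖a‖ = 1 → ContinuousOn T (closure (J.quadRange a))) (b : G) :
    ContinuousOn T (closure (J.quadRange b)) := by
  rcases eq_or_ne b 0 with rfl | hb
  · rw [J.quadRange_zero, closure_singleton]
    exact continuousOn_singleton T 0
  · have hnorm : ‖b‖ ≠ 0 := norm_ne_zero_iff.mpr hb
    rw [← J.quadRange_smul (inv_ne_zero hnorm)]
    exact hT _ (by rw [norm_smul, norm_inv, norm_norm, inv_mul_cancel₀ hnorm])

end JordanBanachTriple

lemma sub_mem_sepSpace {E F : Type*} [NormedAddCommGroup E] [NormedSpace ℝ E]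
    [NormedAddCommGroup F] [NormedSpace ℝ F] (T : E →ₗ[ℝ] F) {u : ℕ → E} {x : E} {y : F}
    (hu : Tendsto u atTop (𝓝 x)) (hTu : Tendsto (T ∘ u) atTop (𝓝 y)) :
    y - T x ∈ sepSpace T :=
  ⟨fun n => u n - x, by simpa using hu.sub_const x,
    by simpa [Function.comp_def] using hTu.sub_const (T x)⟩

lemma LinearMap.continuous_of_sepSpace_eq_zero {E F : Type*}
    [NormedAddCommGroup E] [NormedSpace ℝ E] [CompleteSpace E]
    [NormedAddCommGroup F] [NormedSpace ℝ F] [CompleteSpace F] (T : E →ₗ[ℝ] F)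
    (hT : ∀ z ∈ sepSpace T, z = 0) : Continuous T :=
  T.continuous_of_seq_closed_graph fun _ _ _ hu hTu =>
    sub_eq_zero.mp (hT _ (sub_mem_sepSpace T hu hTu))

lemma tp_self_eq_zero_of_mem_sepSpace {E F : Type*} [NormedAddCommGroup E]
    [NormedAddCommGroup F] [NormedSpace ℝ F] (JF : JordanBanachTriple F) {T : E → F} {z : F}
    (hz : z ∈ sepSpace T) (hT : ∀ b, JF.tp (T b) z (T b) = 0) : JF.tp z z z = 0 := by
  obtain ⟨x, -, hTx⟩ := hz
  have hlim := JF.tendsto_tp hTx (tendsto_const_nhds (x := z)) hTx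
  simp only [hT] at hlim
  exact (tendsto_nhds_unique tendsto_const_nhds hlim).symm

lemma tp_map_mem_sepSpace_map_eq_zero {E F : Type*} [NormedAddCommGroup E] [NormedSpace ℝ E]
    [NormedAddCommGroup F] [NormedSpace ℝ F] (JE : JordanBanachTriple E)
    (JF : JordanBanachTriple F) (T : E →ₗ[ℝ] F) {C : ℝ}
    (h : ∀ a b c, ‖T (JE.tp a b c) - JF.tp (T a) (T b) (T c)‖ ≤ C * ‖a‖ * ‖b‖ * ‖c‖)
    {b : E} (hb : ContinuousOn T (closure (JE.quadRange b))) {z : F} (hz : z ∈ sepSpace T) :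
    JF.tp (T b) z (T b) = 0 := by
  obtain ⟨x, hx, hTx⟩ := hz
  have hsandwich :
      Tendsto (fun n => JE.tp b (x n) b) atTop (𝓝[closure (JE.quadRange b)] 0) := by
    refine tendsto_nhdsWithin_iff.mpr
      ⟨?_, .of_forall fun n => subset_closure (JE.tp_mem_quadRange b (x n))⟩
    simpa [JE.tp_zero_mid] using JE.tendsto_tp tendsto_const_nhds hx tendsto_const_nhds
  have hT0 : Tendsto (fun n => T (JE.tp b (x n) b)) atTop (𝓝 0) := by
    have h0 : (0 : E) ∈ closure (JE.quadRange b) :=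
      subset_closure ⟨0, (JE.tp_zero_mid b b).symm⟩
    simpa [Function.comp_def] using (hb 0 h0).tendsto.comp hsandwich
  have hdefect : Tendsto (fun n => T (JE.tp b (x n) b) - JF.tp (T b) (T (x n)) (T b))
      atTop (𝓝 0) := by
    refine squeeze_zero_norm (a := fun n => C * ‖b‖ * ‖b‖ * ‖x n‖)
      (fun n => (h b (x n) b).trans_eq (by ring)) ?_
    simpa using hx.norm.const_mul (C * ‖b‖ * ‖b‖)
  have hlim : Tendsto (fun n => JF.tp (T b) (T (x n)) (T b)) atTop (𝓝 0) := by
    simpa using hT0.sub hdefect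
  exact tendsto_nhds_unique (JF.tendsto_tp tendsto_const_nhds hTx tendsto_const_nhds) hlim

theorem stmt12_general {E F : Type*}
    [NormedAddCommGroup E] [NormedSpace ℝ E] [CompleteSpace E]
    [NormedAddCommGroup F] [NormedSpace ℝ F] [CompleteSpace F]
    (JE : JordanBanachTriple E) (JF : JordanBanachTriple F)
    (T : E →ₗ[ℝ] F) (C : ℝ)
    (h : ∀ a b c, ‖T (JE.tp a b c) - JF.tp (T a) (T b) (T c)‖ ≤ C * ‖a‖ * ‖b‖ * ‖c‖)
    (haniso : ∀ z : F, JF.tp z z z = 0 → z = 0)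
    (hrestr : ∀ a : E, ‖a‖ = 1 →
      ContinuousOn T (closure {y : E | ∃ x : E, y = JE.tp a x a})) :
    (∀ z ∈ sepSpace T, JF.tp z z z = 0) ∧ Continuous T := by
  have hcube : ∀ z ∈ sepSpace T, JF.tp z z z = 0 := fun z hz =>
    tp_self_eq_zero_of_mem_sepSpace JF hz fun b =>
      tp_map_mem_sepSpace_map_eq_zero JE JF T h (JE.continuousOn_closure_quadRange hrestr b) hz
  exact ⟨hcube, T.continuous_of_sepSpace_eq_zero fun z hz => haniso z (hcube z hz)⟩

/-- If `F` is anisotropic and the restriction of the generalised triple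
homomorphism `T` to every closed inner ideal `E(a)` generated by a single
norm-one element is continuous, then every element of the separating space is
nilpotent of order `3`, and hence `T` is continuous. -/
theorem stmt12 {E F : Type*}
    [NormedAddCommGroup E] [NormedSpace ℝ E] [CompleteSpace E]
    [NormedAddCommGroup F] [NormedSpace ℝ F] [CompleteSpace F]
    (JE : JordanBanachTriple E) (JF : JordanBanachTriple F)
    (T : E →ₗ[ℝ] F) (C : ℝ) (hC : 0 < C)
    (h : ∀ a b c, ‖T (JE.tp a b c) - JF.tp (T a) (T b) (T c)‖ ≤ C * ‖a‖ * ‖b‖ * ‖c‖)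
    (haniso : ∀ z : F, JF.tp z z z = 0 → z = 0)
    (hrestr : ∀ a : E, ‖a‖ = 1 →
      ContinuousOn T (closure {y : E | ∃ x : E, y = JE.tp a x a})) :
    (∀ z ∈ sepSpace T, JF.tp z z z = 0) ∧ Continuous T :=
  stmt12_general JE JF T C h haniso hrestr
end

section
/- Let H be an infinite-dimensional complex Hilbert space regarded as a JB*-triple via {a,b,c} = ½(⟨a,b⟩c + ⟨c,b⟩a). Then every norm-one element e of H is a tripotent ({e,e,e} = e), and the closed subtriple generated by a single element a is ℂa. Consequently, there exists a discontinuous linear map T : H → X into some Banach space whose restriction to each singly generated subtriple is continuous. -/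
open Filter Topology

variable {H : Type*} [NormedAddCommGroup H] [InnerProductSpace ℂ H]

/-- The Hilbert-space triple product `{a,b,c} = ½(⟨a,b⟩c + ⟨c,b⟩a)`, where
`⟨·,·⟩` is linear in the first variable (so `⟨a,b⟩ = inner b a` in Mathlib's
convention). -/
noncomputable def htp (a b c : H) : H :=
  (2 : ℂ)⁻¹ • ((inner ℂ b a : ℂ) • c + (inner ℂ b c : ℂ) • a)

/-- A norm-closed complex subspace of `H` closed under the triple product. -/
def IsClosedSubtriple (S : Set H) : Prop :=
  IsClosed S ∧ (∃ p : Submodule ℂ H, (p : Set H) = S) ∧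
    ∀ x ∈ S, ∀ y ∈ S, ∀ z ∈ S, htp x y z ∈ S

/-- The closed subtriple generated by a single element. -/
def genSubtriple (a : H) : Set H :=
  ⋂₀ {S : Set H | IsClosedSubtriple S ∧ a ∈ S}

/-! `{x, y, z}` is a linear combination of `x` and `z`, so every closed subspace is a subtriple
and the subtriple generated by `a` is the line `ℂ a`. Linear functionals are continuous on
finite-dimensional subspaces, so any discontinuous functional will do; in infinite dimension one
is obtained by prescribing values on a Hamel basis that are unbounded relative to the norms of
the basis vectors. -/

theorem htp_self_self_self (e : H) : htp e e e = inner ℂ e e • e := by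
  rw [htp, ← two_smul ℂ (inner ℂ e e • e), smul_smul, inv_mul_cancel₀ two_ne_zero, one_smul]

theorem htp_self_self_self_of_norm_eq_one {e : H} (he : ‖e‖ = 1) : htp e e e = e := by
  rw [htp_self_self_self, inner_self_eq_norm_sq_to_K, he]
  simp

theorem Submodule.htp_mem (p : Submodule ℂ H) {x z : H} (y : H) (hx : x ∈ p) (hz : z ∈ p) :
    htp x y z ∈ p :=
  p.smul_mem _ (p.add_mem (p.smul_mem _ hz) (p.smul_mem _ hx))

theorem Submodule.isClosedSubtriple (p : Submodule ℂ H) [FiniteDimensional ℂ p] :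
    IsClosedSubtriple (p : Set H) :=
  ⟨p.closed_of_finiteDimensional, ⟨p, rfl⟩, fun _ hx y _ _ hz => p.htp_mem y hx hz⟩

theorem genSubtriple_eq_span (a : H) :
    genSubtriple a = (Submodule.span ℂ {a} : Set H) := by
  refine subset_antisymm (Set.sInter_subset_of_mem
    ⟨(Submodule.span ℂ {a}).isClosedSubtriple, Submodule.mem_span_singleton_self a⟩) ?_
  rintro x hx S ⟨⟨-, ⟨p, rfl⟩, -⟩, haS⟩
  exact Submodule.span_le.mpr (Set.singleton_subset_iff.mpr haS) hx

section NormedSpace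

variable {𝕜 E F : Type*} [NontriviallyNormedField 𝕜] [NormedAddCommGroup E] [NormedSpace 𝕜 E]

theorem LinearMap.continuousOn_of_finiteDimensional [CompleteSpace 𝕜] [NormedAddCommGroup F]
    [NormedSpace 𝕜 F] (f : E →ₗ[𝕜] F) (p : Submodule 𝕜 E) [FiniteDimensional 𝕜 p] :
    ContinuousOn f p :=
  continuousOn_iff_continuous_domRestrict.mpr (f.comp p.subtype).continuous_of_finiteDimensional

theorem exists_linearMap_not_continuous (h : ¬ FiniteDimensional 𝕜 E) :
    ∃ f : E →ₗ[𝕜] 𝕜, ¬ Continuous f := by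
  classical
  let b := Module.Basis.ofVectorSpace 𝕜 E
  have : Infinite (Module.Basis.ofVectorSpaceIndex 𝕜 E) := by
    by_contra hfin
    rw [not_infinite_iff_finite] at hfin
    exact h (Module.Finite.of_basis b)
  obtain ⟨k, hk⟩ : ∃ k : Module.Basis.ofVectorSpaceIndex 𝕜 E → ℕ, Function.Surjective k :=
    ⟨_, Function.invFun_surjective (Infinite.natEmbedding _).injective⟩
  choose c hc using fun i => NormedField.exists_lt_norm 𝕜 (k i * ‖b i‖)
  refine ⟨b.constr 𝕜 c, fun hcont => ?_⟩
  let T : E →L[𝕜] 𝕜 := ⟨b.constr 𝕜 c, hcont⟩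
  obtain ⟨i, hi⟩ := hk ⌈‖T‖⌉₊
  have hbound : (k i : ℝ) * ‖b i‖ < ‖T‖ * ‖b i‖ :=
    calc (k i : ℝ) * ‖b i‖ < ‖c i‖ := hc i
      _ = ‖T (b i)‖ := by simp [T, b.constr_basis]
      _ ≤ ‖T‖ * ‖b i‖ := T.le_opNorm _
  have hki : (k i : ℝ) < ‖T‖ := lt_of_mul_lt_mul_right hbound (norm_nonneg _)
  rw [hi] at hki
  exact (Nat.le_ceil _).not_gt hki

end NormedSpace

theorem stmt14_general (hdim : ¬ FiniteDimensional ℂ H) :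
    (∀ e : H, ‖e‖ = 1 → htp e e e = e) ∧
      (∀ a : H, genSubtriple a = (Submodule.span ℂ {a} : Set H)) ∧
      ∃ T : H →ₗ[ℂ] ℂ, ¬ Continuous T ∧
        ∀ a : H, ContinuousOn T (genSubtriple a) := by
  obtain ⟨T, hT⟩ := exists_linearMap_not_continuous hdim
  refine ⟨fun e => htp_self_self_self_of_norm_eq_one, genSubtriple_eq_span,
    T, hT, fun a => ?_⟩
  rw [genSubtriple_eq_span]
  exact T.continuousOn_of_finiteDimensional _

theorem stmt14 [CompleteSpace H] (hdim : ¬ FiniteDimensional ℂ H) :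
    (∀ e : H, ‖e‖ = 1 → htp e e e = e) ∧
      (∀ a : H, genSubtriple a = (Submodule.span ℂ {a} : Set H)) ∧
      ∃ T : H →ₗ[ℂ] ℂ, ¬ Continuous T ∧
        ∀ a : H, ContinuousOn T (genSubtriple a) :=
  stmt14_general hdim
end

section
/- Let T : E → F be a generalised triple homomorphism between real Jordan Banach triples, and let (xₙ), (yₙ) be sequences in E with Q(yₙ)Q(xₙ) = Q(xₙ) and Q(yₙ)Q(xₘ) = 0 for n ≠ m, where Q(a)(x) = {a,x,a}. Then the map T∘Q(xₙ) : E → F is continuous for all but finitely many n. -/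
/-! If `T ∘ Q(xₙ)` were discontinuous for infinitely many `n`, a gliding hump along those `n`
would give vectors `vₖ = Q(x_{nₖ}) wₖ` with `‖vₖ‖ ≤ 2⁻ᵏ` and `‖T vₖ‖` as large as we please. For
`z = ∑ vₖ` the relations between `Q(yₙ)` and `Q(xₘ)` give `Q(y_{nⱼ}) z = vⱼ`, and since `T`
preserves triple products up to a bounded error,
`‖T vⱼ‖ ≤ C ‖y_{nⱼ}‖² ‖z‖ + M ‖T y_{nⱼ}‖² ‖T z‖`. Taking `‖T vⱼ‖` larger than `j` times these
coefficients makes this fail once `j > ‖z‖ + ‖T z‖`. -/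

open Filter Topology

section GlidingHump

variable {𝕜 E F : Type*} [NontriviallyNormedField 𝕜]
  [NormedAddCommGroup E] [NormedSpace 𝕜 E] [NormedAddCommGroup F] [NormedSpace 𝕜 F]

theorem LinearMap.exists_norm_lt_lt_norm_apply_of_not_continuous (S : E →ₗ[𝕜] F)
    (hS : ¬ Continuous S) {ε : ℝ} (hε : 0 < ε) (K : ℝ) : ∃ w, ‖w‖ < ε ∧ K < ‖S w‖ := by
  by_contra! hK
  obtain ⟨C, hC⟩ := S.bound_of_ball_bound hε K fun w hw => hK w (mem_ball_zero_iff.mp hw)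
  exact hS (AddMonoidHomClass.continuous_of_bound S C hC)

theorem exists_norm_apply_le_lt_norm_comp_apply (T : E →ₗ[𝕜] F) (P : E →L[𝕜] E)
    (hTP : ¬ Continuous (T ∘ P)) {ε : ℝ} (hε : 0 < ε) (K : ℝ) :
    ∃ w, ‖P w‖ ≤ ε ∧ K < ‖T (P w)‖ := by
  obtain ⟨w, hw, hK⟩ := (T ∘ₗ (P : E →ₗ[𝕜] E)).exists_norm_lt_lt_norm_apply_of_not_continuous
    hTP (div_pos hε (by positivity : 0 < ‖P‖ + 1)) K
  refine ⟨w, ?_, hK⟩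
  calc ‖P w‖ ≤ ‖P‖ * ‖w‖ := P.le_opNorm w
    _ ≤ (‖P‖ + 1) * (ε / (‖P‖ + 1)) := by gcongr; linarith
    _ = ε := by field_simp

variable [CompleteSpace E]

theorem false_of_forall_not_continuous_comp (T : E →ₗ[𝕜] F) (P R : ℕ → E →L[𝕜] E)
    (hRP_self : ∀ k w, R k (P k w) = P k w) (hRP_ne : ∀ k l, k ≠ l → ∀ w, R k (P l w) = 0)
    (hTR : ∀ k, ∃ α β : ℝ, ∀ z, ‖T (R k z)‖ ≤ α * ‖z‖ + β * ‖T z‖)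
    (hTP : ∀ k, ¬ Continuous (T ∘ P k)) : False := by
  choose α β hαβ using hTR
  have hump : ∀ k : ℕ, ∃ w, ‖P k w‖ ≤ (1 / 2) ^ k ∧ k * (1 + |α k| + |β k|) < ‖T (P k w)‖ :=
    fun k => exists_norm_apply_le_lt_norm_comp_apply T (P k) (hTP k) (by positivity) _
  choose w hw_small hw_big using hump
  have hv : Summable fun k => P k (w k) := .of_norm_bounded summable_geometric_two hw_small
  set z := ∑' k, P k (w k)
  have hRz : ∀ j, R j z = P j (w j) := fun j => by
    rw [(R j).map_tsum hv, tsum_eq_single j fun k hk => hRP_ne j k (Ne.symm hk) (w k), hRP_self]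
  obtain ⟨j, hj⟩ := exists_nat_gt (‖z‖ + ‖T z‖)
  have hupper : ‖T (P j (w j))‖ < (1 + |α j| + |β j|) * j := calc
    ‖T (P j (w j))‖ = ‖T (R j z)‖ := by rw [hRz]
    _ ≤ α j * ‖z‖ + β j * ‖T z‖ := hαβ j z
    _ ≤ (1 + |α j| + |β j|) * (‖z‖ + ‖T z‖) := by
      nlinarith [le_abs_self (α j), le_abs_self (β j), abs_nonneg (α j), abs_nonneg (β j),
        norm_nonneg z, norm_nonneg (T z)]
    _ < (1 + |α j| + |β j|) * j := by gcongr
  linarith [hw_big j]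

theorem finite_setOf_not_continuous_comp (T : E →ₗ[𝕜] F) (P R : ℕ → E →L[𝕜] E)
    (hRP_self : ∀ n w, R n (P n w) = P n w) (hRP_ne : ∀ n m, n ≠ m → ∀ w, R n (P m w) = 0)
    (hTR : ∀ n, ∃ α β : ℝ, ∀ z, ‖T (R n z)‖ ≤ α * ‖z‖ + β * ‖T z‖) :
    {n | ¬ Continuous (T ∘ P n)}.Finite := by
  by_contra hinf
  let ν := Set.Infinite.natEmbedding _ hinf
  exact false_of_forall_not_continuous_comp T (fun k => P (ν k)) (fun k => R (ν k))
    (fun k => hRP_self _) (fun k l hkl => hRP_ne _ _ fun h => hkl (ν.injective (Subtype.ext h)))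
    (fun k => hTR _) (fun k => (ν k).2)

end GlidingHump

namespace JordanBanachTriple

variable {E : Type*} [NormedAddCommGroup E] [NormedSpace ℝ E]

noncomputable def Q (J : JordanBanachTriple E) (a : E) : E →L[ℝ] E :=
  LinearMap.mkContinuousOfExistsBound
    { toFun := fun z => J.tp a z a
      map_add' := fun b b' => J.add_mid a b b' a
      map_smul' := fun r b => J.smul_mid r a b a }
    (let ⟨M, _, hM⟩ := J.bound; ⟨M * ‖a‖ * ‖a‖, fun z => (hM a z a).trans_eq (by ring)⟩)

theorem Q_apply (J : JordanBanachTriple E) (a z : E) : J.Q a z = J.tp a z a := rfl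

end JordanBanachTriple

theorem norm_map_tp_le {E F : Type*} [NormedAddCommGroup E] [NormedSpace ℝ E]
    [NormedAddCommGroup F] [NormedSpace ℝ F] {JE : JordanBanachTriple E}
    {JF : JordanBanachTriple F} {T : E →ₗ[ℝ] F} {C M : ℝ}
    (hT : ∀ a b c, ‖T (JE.tp a b c) - JF.tp (T a) (T b) (T c)‖ ≤ C * ‖a‖ * ‖b‖ * ‖c‖)
    (hM : ∀ a b c, ‖JF.tp a b c‖ ≤ M * ‖a‖ * ‖b‖ * ‖c‖) (a b c : E) :
    ‖T (JE.tp a b c)‖ ≤ C * ‖a‖ * ‖b‖ * ‖c‖ + M * ‖T a‖ * ‖T b‖ * ‖T c‖ :=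
  (norm_le_norm_add_norm_sub' _ (JF.tp (T a) (T b) (T c))).trans
    (by linarith [hT a b c, hM (T a) (T b) (T c)])

theorem stmt16_general {E F : Type*}
    [NormedAddCommGroup E] [NormedSpace ℝ E] [CompleteSpace E]
    [NormedAddCommGroup F] [NormedSpace ℝ F]
    (JE : JordanBanachTriple E) (JF : JordanBanachTriple F)
    (T : E →ₗ[ℝ] F) (C : ℝ)
    (h : ∀ a b c, ‖T (JE.tp a b c) - JF.tp (T a) (T b) (T c)‖ ≤ C * ‖a‖ * ‖b‖ * ‖c‖)
    (x y : ℕ → E)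
    (h1 : ∀ n, ∀ z : E, JE.tp (y n) (JE.tp (x n) z (x n)) (y n) = JE.tp (x n) z (x n))
    (h2 : ∀ n m, n ≠ m → ∀ z : E, JE.tp (y n) (JE.tp (x m) z (x m)) (y n) = 0) :
    {n : ℕ | ¬ Continuous fun z => T (JE.tp (x n) z (x n))}.Finite := by
  obtain ⟨M, -, hM⟩ := JF.bound
  refine finite_setOf_not_continuous_comp T (fun n => JE.Q (x n)) (fun n => JE.Q (y n))
    h1 h2 fun n => ⟨C * ‖y n‖ * ‖y n‖, M * ‖T (y n)‖ * ‖T (y n)‖, fun z => ?_⟩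
  have := norm_map_tp_le h hM (y n) z (y n)
  simp only [JordanBanachTriple.Q_apply]
  linarith

/-- If `Q(yₙ)Q(xₙ) = Q(xₙ)` and `Q(yₙ)Q(xₘ) = 0` for `n ≠ m`, then
`T ∘ Q(xₙ)` is continuous for all but finitely many `n`. -/
theorem stmt16 {E F : Type*}
    [NormedAddCommGroup E] [NormedSpace ℝ E] [CompleteSpace E]
    [NormedAddCommGroup F] [NormedSpace ℝ F] [CompleteSpace F]
    (JE : JordanBanachTriple E) (JF : JordanBanachTriple F)
    (T : E →ₗ[ℝ] F) (C : ℝ) (hC : 0 < C)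
    (h : ∀ a b c, ‖T (JE.tp a b c) - JF.tp (T a) (T b) (T c)‖ ≤ C * ‖a‖ * ‖b‖ * ‖c‖)
    (x y : ℕ → E)
    (h1 : ∀ n, ∀ z : E, JE.tp (y n) (JE.tp (x n) z (x n)) (y n) = JE.tp (x n) z (x n))
    (h2 : ∀ n m, n ≠ m → ∀ z : E, JE.tp (y n) (JE.tp (x m) z (x m)) (y n) = 0) :
    {n : ℕ | ¬ Continuous fun z => T (JE.tp (x n) z (x n))}.Finite :=
  stmt16_general JE JF T C h x y h1 h2
end

section
/- Let A be an abelian C*-algebra and T : A_sa → X a linear map into a Banach space. Suppose J_T := { a ∈ A_sa : the map x ↦ T(axa) is continuous } is norm-closed and satisfies a·A_sa·a ⊆ J_T for every a ∈ J_T. Then J_T is a linear subspace of A_sa (and hence a closed triple ideal of A_sa for the product {a,b,c} = abc). -/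
/-!
Extend `T` to a real-linear `S` on `A` (through the real part). For self-adjoint `a` and `x`,
`T (a x a) = S (a² x)`, so `J_T` is the set of self-adjoint `a` with `a²` in the real subspace
`W = {c | x ↦ S (c x) is continuous}`. As `(a + b)² = a² + b² + 2ab`, the point is that `ab ∈ W`
for `a, b ∈ J_T`.

Closedness and `a A_sa a ⊆ J_T` give `f(a) ∈ J_T` for every continuous `f` with `f 0 = 0`:
`f` is the uniform limit on the spectrum of `t ↦ t · (f t / (t² + δ)) · t` as `δ → 0`. With
`r = √f(a)` this yields `f(a) b = r b r ∈ J_T` for `f ≥ 0` and self-adjoint `b`. Now write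
`a = p₊² - p₋²` and `b = q₊² - q₋²` with `p_± = √(a^±)`, `q_± = √(b^±)`: then `ab` is a signed
sum of the squares `(p_i q_j)²`, and `p_i q_j ∈ J_T`.
-/

theorem IsCompact.exists_pos_abs_mul_le_mul_sq_add {K : Set ℝ} (hK : IsCompact K)
    {f : ℝ → ℝ} (hf : Continuous f) (hf0 : f 0 = 0) {ε : ℝ} (hε : 0 < ε) :
    ∃ δ > 0, ∀ t ∈ K, |f t| * δ ≤ ε * (t ^ 2 + δ) := by
  obtain ⟨M, hM⟩ := hK.exists_bound_of_continuousOn hf.continuousOn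
  obtain ⟨η, hη, hfη⟩ := Metric.continuous_iff.1 hf 0 ε hε
  have hM' : 0 < max M 1 := lt_max_of_lt_right one_pos
  -- Continuity at `0` handles `|t| < η`; for `|t| ≥ η`, `δ` is chosen so that `M δ = ε η² ≤ ε t²`.
  refine ⟨ε * η ^ 2 / max M 1, by positivity, fun t ht => ?_⟩
  set δ := ε * η ^ 2 / max M 1
  have hδ : 0 < δ := by positivity
  rcases lt_or_ge |t| η with htη | htη
  · have : |f t| < ε := by
      simpa [Real.dist_eq, hf0] using hfη t (by simpa [Real.dist_eq] using htη)
    nlinarith [sq_nonneg t]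
  · have hMδ : max M 1 * δ = ε * η ^ 2 := by simp only [δ]; field_simp
    have hfM : |f t| ≤ max M 1 := (hM t ht).trans (le_max_left _ _)
    have : η ^ 2 ≤ t ^ 2 := by nlinarith [sq_abs t, abs_nonneg t]
    nlinarith [mul_le_mul_of_nonneg_right hfM hδ.le]

section ContinuousFunctionalCalculus
variable {A : Type*} [Ring A] [StarRing A] [TopologicalSpace A] [Algebra ℝ A]
  [ContinuousFunctionalCalculus ℝ A IsSelfAdjoint]

theorem cfc_sqrt_mul_self {f : ℝ → ℝ} (hf : Continuous f) (hf_nonneg : ∀ t, 0 ≤ f t) (a : A) :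
    cfc (fun t => √(f t)) a * cfc (fun t => √(f t)) a = cfc f a := by
  rw [← cfc_mul _ _ a hf.sqrt.continuousOn hf.sqrt.continuousOn]
  exact cfc_congr fun t _ => Real.mul_self_sqrt (hf_nonneg t)

theorem cfc_posPart_sub_cfc_negPart (a : A) (ha : IsSelfAdjoint a) :
    cfc (fun t : ℝ => t⁺) a - cfc (fun t : ℝ => t⁻) a = a := by
  rw [← cfc_sub _ _ a continuous_posPart.continuousOn continuous_negPart.continuousOn]
  exact (cfc_congr fun t _ => posPart_sub_negPart t).trans (cfc_id' ℝ a)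

end ContinuousFunctionalCalculus

section Commutative
variable {A : Type*} [CommCStarAlgebra A] {J : Set A}

theorem cfc_mem_of_isClosed (hJ : IsClosed J)
    (hmul : ∀ a ∈ J, ∀ b, IsSelfAdjoint b → a * b * a ∈ J) {a : A} (ha : a ∈ J)
    (ha' : IsSelfAdjoint a) {f : ℝ → ℝ} (hf : Continuous f) (hf0 : f 0 = 0) :
    cfc f a ∈ J := by
  refine hJ.closure_subset (Metric.mem_closure_iff.2 fun ε hε => ?_)
  obtain ⟨δ, hδ, hfδ⟩ :=
    (spectrum.isCompact a).exists_pos_abs_mul_le_mul_sq_add hf hf0 (half_pos hε)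
  set g : ℝ → ℝ := fun t => f t / (t ^ 2 + δ)
  have hg : Continuous g := hf.div (by fun_prop) fun t => by positivity
  refine ⟨a * cfc g a * a, hmul a ha _ (cfc_predicate g a), ?_⟩
  have hga : cfc (fun t => t * g t * t) a = a * cfc g a * a := by
    rw [cfc_mul (fun t => t * g t) (fun t => t) a, cfc_mul (fun t => t) g a, cfc_id' ℝ a]
  rw [dist_eq_norm, ← hga, ← cfc_sub _ _ a hf.continuousOn (by fun_prop)]
  calc ‖cfc (fun t => f t - t * g t * t) a‖ ≤ ε / 2 := norm_cfc_le (half_pos hε).le fun t ht => ?_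
    _ < ε := half_lt_self hε
  have hpos : 0 < t ^ 2 + δ := by positivity
  have : f t - t * g t * t = f t * δ / (t ^ 2 + δ) := by simp only [g]; field_simp; ring
  rw [this, Real.norm_eq_abs, abs_div, abs_mul, abs_of_pos hδ, abs_of_pos hpos, div_le_iff₀ hpos]
  exact hfδ t ht

theorem cfc_mul_mem_of_isClosed (hJ : IsClosed J)
    (hmul : ∀ a ∈ J, ∀ b, IsSelfAdjoint b → a * b * a ∈ J) {a : A} (ha : a ∈ J)
    (ha' : IsSelfAdjoint a) {f : ℝ → ℝ} (hf : Continuous f) (hf0 : f 0 = 0)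
    (hf_nonneg : ∀ t, 0 ≤ f t) {b : A} (hb : IsSelfAdjoint b) : cfc f a * b ∈ J := by
  have hr := cfc_mem_of_isClosed hJ hmul ha ha' hf.sqrt (by simp [hf0])
  rw [← cfc_sqrt_mul_self hf hf_nonneg, mul_right_comm]
  exact hmul _ hr b hb

end Commutative

def LinearMap.continuousMulLeftSubmodule {𝕜 R X Y : Type*} [CommSemiring 𝕜] [Semiring R]
    [Algebra 𝕜 R] [AddCommMonoid X] [Module 𝕜 X] [TopologicalSpace X] [ContinuousAdd X]
    [ContinuousConstSMul 𝕜 X] [TopologicalSpace Y] (L : R →ₗ[𝕜] X) (φ : Y → R) :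
    Submodule 𝕜 R where
  carrier := {c | Continuous fun y => L (c * φ y)}
  zero_mem' := by simpa using continuous_const
  add_mem' {c d} hc hd := by
    simp only [Set.mem_ofPred_eq, add_mul, map_add] at hc hd ⊢
    exact hc.add hd
  smul_mem' r c hc := by
    simp only [Set.mem_ofPred_eq, smul_mul_assoc, map_smul] at hc ⊢
    exact hc.const_smul r

def Submodule.selfAdjointSqrts {𝕜 R : Type*} [Semiring 𝕜] [Semiring R] [StarRing R]
    [Module 𝕜 R] (W : Submodule 𝕜 R) : Set R :=
  {a | IsSelfAdjoint a ∧ a * a ∈ W}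

namespace Submodule

theorem smul_mem_selfAdjointSqrts {R : Type*} [Ring R] [StarRing R] [Algebra ℝ R]
    [StarModule ℝ R] {W : Submodule ℝ R} (r : ℝ) {a : R} (ha : a ∈ W.selfAdjointSqrts) :
    r • a ∈ W.selfAdjointSqrts := by
  refine ⟨(IsSelfAdjoint.all r).smul ha.1, ?_⟩
  rw [smul_mul_assoc, mul_smul_comm, smul_smul]
  exact W.smul_mem _ ha.2

variable {A : Type*} [CommCStarAlgebra A] {W : Submodule ℝ A}

theorem mul_mem_of_mem_selfAdjointSqrts (hclosed : IsClosed W.selfAdjointSqrts)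
    (hmul : ∀ a ∈ W.selfAdjointSqrts, ∀ b, IsSelfAdjoint b → a * b * a ∈ W.selfAdjointSqrts)
    {a b : A} (ha : a ∈ W.selfAdjointSqrts) (hb : b ∈ W.selfAdjointSqrts) : a * b ∈ W := by
  have hsq_mem {f : ℝ → ℝ} (hf : Continuous f) (hf0 : f 0 = 0) (hf_nonneg : ∀ t, 0 ≤ f t)
      (g : ℝ → ℝ) : cfc f a * cfc g b * (cfc f a * cfc g b) ∈ W :=
    (cfc_mul_mem_of_isClosed hclosed hmul ha ha.1 hf hf0 hf_nonneg (cfc_predicate g b)).2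
  set p : ℝ → ℝ := fun t => √t⁺
  set n : ℝ → ℝ := fun t => √t⁻
  have hp : Continuous p := continuous_posPart.sqrt
  have hn : Continuous n := continuous_negPart.sqrt
  have hdecomp (c : A) (hc : IsSelfAdjoint c) :
      c = cfc p c * cfc p c - cfc n c * cfc n c := by
    rw [cfc_sqrt_mul_self continuous_posPart posPart_nonneg,
      cfc_sqrt_mul_self continuous_negPart negPart_nonneg, cfc_posPart_sub_cfc_negPart c hc]
  have hab : a * b = cfc p a * cfc p b * (cfc p a * cfc p b)
      - cfc p a * cfc n b * (cfc p a * cfc n b)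
      - (cfc n a * cfc p b * (cfc n a * cfc p b) - cfc n a * cfc n b * (cfc n a * cfc n b)) := by
    linear_combination
      b * hdecomp a ha.1 + (cfc p a * cfc p a - cfc n a * cfc n a) * hdecomp b hb.1
  have hp_mem := hsq_mem hp (by simp [p]) fun _ => Real.sqrt_nonneg _
  have hn_mem := hsq_mem hn (by simp [n]) fun _ => Real.sqrt_nonneg _
  rw [hab]
  exact sub_mem (sub_mem (hp_mem p) (hp_mem n)) (sub_mem (hn_mem p) (hn_mem n))

theorem add_mem_selfAdjointSqrts (hclosed : IsClosed W.selfAdjointSqrts)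
    (hmul : ∀ a ∈ W.selfAdjointSqrts, ∀ b, IsSelfAdjoint b → a * b * a ∈ W.selfAdjointSqrts)
    {a b : A} (ha : a ∈ W.selfAdjointSqrts) (hb : b ∈ W.selfAdjointSqrts) :
    a + b ∈ W.selfAdjointSqrts := by
  have hab := mul_mem_of_mem_selfAdjointSqrts hclosed hmul ha hb
  refine ⟨ha.1.add hb.1, ?_⟩
  rw [show (a + b) * (a + b) = a * a + b * b + (a * b + a * b) by ring]
  exact add_mem (add_mem ha.2 hb.2) (add_mem hab hab)

theorem mul_mul_mem_selfAdjointSqrts (hclosed : IsClosed W.selfAdjointSqrts)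
    (hmul : ∀ a ∈ W.selfAdjointSqrts, ∀ b, IsSelfAdjoint b → a * b * a ∈ W.selfAdjointSqrts)
    {x y a : A} (hx : IsSelfAdjoint x) (hy : IsSelfAdjoint y) (ha : a ∈ W.selfAdjointSqrts) :
    x * y * a ∈ W.selfAdjointSqrts := by
  have hpos := cfc_mul_mem_of_isClosed hclosed hmul ha ha.1 continuous_posPart (by simp)
    posPart_nonneg (hx.mul hy)
  have hneg := cfc_mul_mem_of_isClosed hclosed hmul ha ha.1 continuous_negPart (by simp)
    negPart_nonneg (hx.mul hy)
  have hxya : x * y * a =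
      cfc (fun t : ℝ => t⁺) a * (x * y) + (-1 : ℝ) • (cfc (fun t : ℝ => t⁻) a * (x * y)) := by
    rw [neg_one_smul, ← sub_eq_add_neg, ← sub_mul, cfc_posPart_sub_cfc_negPart a ha.1, mul_comm]
  rw [hxya]
  exact add_mem_selfAdjointSqrts hclosed hmul hpos (smul_mem_selfAdjointSqrts _ hneg)

end Submodule

theorem exists_linearMap_eq_of_isSelfAdjoint {A X : Type*} [AddCommGroup A] [Module ℂ A]
    [StarAddMonoid A] [StarModule ℂ A] [AddCommGroup X] [Module ℝ X] (T : A → X)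
    (hadd : ∀ a b : A, IsSelfAdjoint a → IsSelfAdjoint b → T (a + b) = T a + T b)
    (hsmul : ∀ (r : ℝ) (a : A), IsSelfAdjoint a → T (r • a) = r • T a) :
    ∃ S : A →ₗ[ℝ] X, ∀ a, IsSelfAdjoint a → S a = T a := by
  let T' : selfAdjoint A →ₗ[ℝ] X :=
    { toFun := fun x => T x
      map_add' := fun x y => hadd x y x.2 y.2
      map_smul' := fun r x => hsmul r x x.2 }
  exact ⟨T' ∘ₗ realPart, fun a ha => congrArg T ha.coe_realPart⟩

theorem stmt19_general {A X : Type*}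
    [NormedCommRing A] [StarRing A] [CStarRing A] [CompleteSpace A]
    [NormedAlgebra ℂ A] [StarModule ℂ A]
    [NormedAddCommGroup X] [NormedSpace ℝ X]
    (T : A → X)
    (hadd : ∀ a b : A, IsSelfAdjoint a → IsSelfAdjoint b → T (a + b) = T a + T b)
    (hsmul : ∀ (r : ℝ) (a : A), IsSelfAdjoint a → T (r • a) = r • T a)
    (JT : Set A)
    (hJT : JT = {a : A | IsSelfAdjoint a ∧
      Continuous fun x : selfAdjoint A => T (a * (x : A) * a)})
    (hclosed : IsClosed JT)
    (hinner : ∀ a ∈ JT, ∀ b : A, IsSelfAdjoint b → a * b * a ∈ JT) :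
    (0 : A) ∈ JT ∧
      (∀ a b, a ∈ JT → b ∈ JT → a + b ∈ JT) ∧
      (∀ (r : ℝ) (a), a ∈ JT → r • a ∈ JT) ∧
      (∀ x y : A, IsSelfAdjoint x → IsSelfAdjoint y → ∀ a ∈ JT, x * y * a ∈ JT) := by
  let _ : CommCStarAlgebra A := {}
  obtain ⟨S, hS⟩ := exists_linearMap_eq_of_isSelfAdjoint T hadd hsmul
  have hJS :
      JT = (S.continuousMulLeftSubmodule ((↑) : selfAdjoint A → A)).selfAdjointSqrts := by
    rw [hJT]
    ext a
    refine and_congr_right fun ha => ?_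
    have hTS :
        (fun x : selfAdjoint A => T (a * x * a)) = fun x : selfAdjoint A => S (a * a * x) :=
      funext fun x => by rw [← hS _ (x.2.conjugate_self ha), mul_right_comm]
    rw [hTS]
    rfl
  subst hJS
  exact ⟨⟨.zero A, by simp⟩, fun a b => Submodule.add_mem_selfAdjointSqrts hclosed hinner,
    fun r a => Submodule.smul_mem_selfAdjointSqrts r,
    fun x y hx hy a => Submodule.mul_mul_mem_selfAdjointSqrts hclosed hinner hx hy⟩

/-- Let `A` be an abelian C*-algebra and `T` a real-linear map on `A_sa` into a
Banach space. If `J_T = {a ∈ A_sa : x ↦ T (a x a) is continuous}` is norm-closed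
and satisfies `a ⬝ A_sa ⬝ a ⊆ J_T` for every `a ∈ J_T`, then `J_T` is a linear
subspace of `A_sa`, and a (closed) triple ideal of `A_sa` for `{a,b,c} = abc`. -/
theorem stmt19 {A X : Type*}
    [NormedCommRing A] [StarRing A] [CStarRing A] [CompleteSpace A]
    [NormedAlgebra ℂ A] [StarModule ℂ A]
    [NormedAddCommGroup X] [NormedSpace ℝ X] [CompleteSpace X]
    (T : A → X)
    (hadd : ∀ a b : A, IsSelfAdjoint a → IsSelfAdjoint b → T (a + b) = T a + T b)
    (hsmul : ∀ (r : ℝ) (a : A), IsSelfAdjoint a → T (r • a) = r • T a)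
    (JT : Set A)
    (hJT : JT = {a : A | IsSelfAdjoint a ∧
      Continuous fun x : selfAdjoint A => T (a * (x : A) * a)})
    (hclosed : IsClosed JT)
    (hinner : ∀ a ∈ JT, ∀ b : A, IsSelfAdjoint b → a * b * a ∈ JT) :
    (0 : A) ∈ JT ∧
      (∀ a b, a ∈ JT → b ∈ JT → a + b ∈ JT) ∧
      (∀ (r : ℝ) (a), a ∈ JT → r • a ∈ JT) ∧
      (∀ x y : A, IsSelfAdjoint x → IsSelfAdjoint y → ∀ a ∈ JT, x * y * a ∈ JT) :=
  stmt19_general T hadd hsmul JT hJT hclosed hinner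
end
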